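/- arXiv:math/0407038 — 9 statements merged into one kernel-verified Lean document; each statement's English description precedes it below -/
import Mathlib

section
/- Let F be a field and let S = {(X, Y) ∈ M₂(F) × M₂(F) : det X = 0, det Y = 0, det(X + Y) = 1}. Then (E₁₁, E₂₂) ∈ S and H₁(F) acts transitively on S; that is, for every (X, Y) ∈ S there exists (g₁, g₂) ∈ GL₂(F) × GL₂(F) with det g₁ = det g₂ such that X = g₁ E₁₁ g₂⁻¹ and Y = g₁ E₂₂ g₂⁻¹. -/
/-!
A singular `2 × 2` matrix over a field is a rank-one product `x ξᵀ`. Writing `X = x ξᵀ` and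
`Y = y ηᵀ`, let `g` have columns `x, y` and `k` have rows `ξ, η`; then `X = g E₁₁ k`,
`Y = g E₂₂ k` and `X + Y = g k`, so `det g * det k = 1` and `(g, k⁻¹)` is the required pair.
-/

open Matrix

namespace Matrix

theorem exists_eq_vecMulVec_of_det_eq_zero {K : Type*} [Field K] {X : Matrix (Fin 2) (Fin 2) K}
    (hX : X.det = 0) : ∃ x ξ : Fin 2 → K, X = vecMulVec x ξ := by
  by_cases h0 : X 0 = 0
  · refine ⟨![0, 1], X 1, ?_⟩
    ext i j
    fin_cases i <;> simp [vecMulVec_apply, h0]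
  · have hdep : ¬ LinearIndependent K ![X 0, X 1] := by
      have hrows : ![X 0, X 1] = X.row := by ext i; fin_cases i <;> rfl
      rw [hrows, linearIndependent_rows_iff_isUnit, isUnit_iff_isUnit_det, hX]
      exact not_isUnit_zero
    obtain ⟨t, ht⟩ : ∃ t : K, t • X 0 = X 1 := by
      simpa [LinearIndependent.pair_iff' h0] using hdep
    refine ⟨![1, t], X 0, ?_⟩
    ext i j
    fin_cases i <;> simp [vecMulVec_apply, ← ht]

theorem transpose_of_mul_mul_of_eq_vecMulVec_add {R : Type*} [CommSemiring R]
    (x y ξ η : Fin 2 → R) (a b : R) :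
    (of ![x, y])ᵀ * !![a, 0; 0, b] * of ![ξ, η] = a • vecMulVec x ξ + b • vecMulVec y η := by
  ext i j
  simp [mul_apply, Fin.sum_univ_two, vecMulVec_apply, mul_assoc, mul_left_comm]

end Matrix

theorem stmt_0 (F : Type*) [Field F] :
    ((!![1,0;0,0] : Matrix (Fin 2) (Fin 2) F).det = 0 ∧
      (!![0,0;0,1] : Matrix (Fin 2) (Fin 2) F).det = 0 ∧
      ((!![1,0;0,0] + !![0,0;0,1] : Matrix (Fin 2) (Fin 2) F)).det = 1) ∧
    ∀ X Y : Matrix (Fin 2) (Fin 2) F,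
      X.det = 0 → Y.det = 0 → (X + Y).det = 1 →
      ∃ g₁ g₂ : Matrix (Fin 2) (Fin 2) F,
        IsUnit g₁.det ∧ IsUnit g₂.det ∧ g₁.det = g₂.det ∧
        X = g₁ * !![1,0;0,0] * g₂⁻¹ ∧ Y = g₁ * !![0,0;0,1] * g₂⁻¹ := by
  refine ⟨by simp [det_fin_two_of], fun X Y hX hY hXY => ?_⟩
  obtain ⟨x, ξ, rfl⟩ := exists_eq_vecMulVec_of_det_eq_zero hX
  obtain ⟨y, η, rfl⟩ := exists_eq_vecMulVec_of_det_eq_zero hY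
  set g := (of ![x, y])ᵀ
  set k := of ![ξ, η]
  have hgk : g.det * k.det = 1 := by
    rw [← det_mul, ← hXY, ← mul_one g, one_fin_two, transpose_of_mul_mul_of_eq_vecMulVec_add]
    simp
  have hk : IsUnit k.det := IsUnit.of_mul_eq_one_right _ hgk
  refine ⟨g, k⁻¹, IsUnit.of_mul_eq_one _ hgk, k.isUnit_nonsing_inv_det hk, ?_, ?_, ?_⟩
  · rw [det_nonsing_inv, Ring.inverse_eq_inv', eq_inv_of_mul_eq_one_left hgk]
  · rw [nonsing_inv_nonsing_inv k hk, transpose_of_mul_mul_of_eq_vecMulVec_add]; simp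
  · rw [nonsing_inv_nonsing_inv k hk, transpose_of_mul_mul_of_eq_vecMulVec_add]; simp
end

section
/- Let F be a field and let (g₁, g₂) ∈ GL₂(F) × GL₂(F) with det g₁ = det g₂. Then g₁ E₁₁ g₂⁻¹ = E₁₁ and g₁ E₂₂ g₂⁻¹ = E₂₂ hold if and only if there exist a, d ∈ F× such that g₁ = g₂ = diag(a, d). In other words, the stabilizer of the pair (E₁₁, E₂₂) in H₁(F) is the group of pairs (t, t) with t an invertible diagonal 2×2 matrix. -/
open Matrix

theorem stmt_1 (F : Type*) [Field F] (g₁ g₂ : Matrix (Fin 2) (Fin 2) F)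
    (hg₁ : IsUnit g₁.det) (hg₂ : IsUnit g₂.det) (hdet : g₁.det = g₂.det) :
    (g₁ * !![1,0;0,0] * g₂⁻¹ = !![1,0;0,0] ∧ g₁ * !![0,0;0,1] * g₂⁻¹ = !![0,0;0,1]) ↔
    ∃ a d : F, a ≠ 0 ∧ d ≠ 0 ∧ g₁ = !![a,0;0,d] ∧ g₂ = !![a,0;0,d] := by
  have hinv : g₂⁻¹ * g₂ = 1 := Matrix.nonsing_inv_mul g₂ hg₂
  constructor
  · rintro ⟨h1, h2⟩
    have h1' : g₁ * !![1,0;0,0] = !![(1:F),0;0,0] * g₂ := by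
      have := congrArg (· * g₂) h1
      simpa [mul_assoc, hinv] using this
    have h2' : g₁ * !![0,0;0,1] = !![(0:F),0;0,1] * g₂ := by
      have := congrArg (· * g₂) h2
      simpa [mul_assoc, hinv] using this
    have heq : g₁ = g₂ := by
      have hsum := congrArg₂ (· + ·) h1' h2'
      rw [← mul_add, ← add_mul] at hsum
      have hIdd : !![(1:F),0;0,0] + !![(0:F),0;0,1] = 1 := by
        ext i j; fin_cases i <;> fin_cases j <;> simp
      rw [hIdd, mul_one, one_mul] at hsum
      exact hsum
    subst heq
    have e01 : g₁ 0 1 = 0 := by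
      have := congrFun (congrFun h1' 0) 1
      simpa [mul_apply, Fin.sum_univ_two] using this.symm
    have e10 : g₁ 1 0 = 0 := by
      have := congrFun (congrFun h1' 1) 0
      simpa [mul_apply, Fin.sum_univ_two] using this
    refine ⟨g₁ 0 0, g₁ 1 1, ?_, ?_, ?_, ?_⟩
    · intro h
      rw [Matrix.det_fin_two, e01, h] at hg₁
      simp at hg₁
    · intro h
      rw [Matrix.det_fin_two, e10, h] at hg₁
      simp at hg₁
    · ext i j; fin_cases i <;> fin_cases j <;> simp [e01, e10]
    · ext i j; fin_cases i <;> fin_cases j <;> simp [e01, e10]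
  · rintro ⟨a, d, ha, hd, rfl, rfl⟩
    have hinv' : (!![a,0;0,d] : Matrix (Fin 2) (Fin 2) F)⁻¹ = !![a⁻¹,0;0,d⁻¹] := by
      rw [Matrix.inv_def, Matrix.det_fin_two, Matrix.adjugate_fin_two]
      ext i j; fin_cases i <;> fin_cases j <;>
        simp [Ring.inverse_eq_inv'] <;> field_simp
    rw [hinv']
    constructor <;> · ext i j; fin_cases i <;> fin_cases j <;>
      simp [mul_apply, Fin.sum_univ_two, ha, hd]
end

section
/- Let F be a field and let S' = {(M₁, M₂) ∈ M₂(F) × M₂(F) : det M₁ = 0, det M₂ = 1, and det(M₁ + M₂) = det M₁ + det M₂}. Then S' is exactly the union of the H₁(F)-orbit of (0, I₂) and the H₁(F)-orbit of (E₁₁, w), and these two orbits are disjoint. (The condition det(M₁+M₂) = det M₁ + det M₂ is the vanishing of the polar bilinear form of the quadratic form det on M₂(F).) -/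
open Matrix

def InH1Orbit (F : Type*) [Field F] (A B M₁ M₂ : Matrix (Fin 2) (Fin 2) F) : Prop :=
  ∃ g₁ g₂ : Matrix (Fin 2) (Fin 2) F,
    IsUnit g₁.det ∧ IsUnit g₂.det ∧ g₁.det = g₂.det ∧
    M₁ = g₁ * A * g₂⁻¹ ∧ M₂ = g₁ * B * g₂⁻¹

section aux
variable (F : Type*) [Field F]

lemma det_conj_aux {g₁ g₂ A : Matrix (Fin 2) (Fin 2) F} (h1 : IsUnit g₁.det)
    (h2 : IsUnit g₂.det) (h : g₁.det = g₂.det) :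
    (g₁ * A * g₂⁻¹).det = A.det := by
  rw [det_mul, det_mul, det_nonsing_inv, Ring.inverse_eq_inv', h, mul_comm, ← mul_assoc,
    inv_mul_cancel₀ h2.ne_zero, one_mul]

lemma key_hard {M₁ M₂ : Matrix (Fin 2) (Fin 2) F} (h1 : M₁.det = 0) (h2 : M₂.det = 1)
    (h3 : (M₁ + M₂).det = 1) (hne : M₁ ≠ 0) :
    InH1Orbit F !![1,0;0,0] !![0,1;-1,0] M₁ M₂ := by
  set P : Matrix (Fin 2) (Fin 2) F := M₂.adjugate * M₁ with hPdef
  have hMP : M₂ * P = M₁ := by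
    rw [hPdef, ← Matrix.mul_assoc, Matrix.mul_adjugate, h2, one_smul, Matrix.one_mul]
  set p := P 0 0; set q := P 0 1; set r := P 1 0; set s := P 1 1
  have hPe : P = !![p, q; r, s] := Matrix.eta_fin_two P
  have hdetP : p * s - q * r = 0 := by
    have : P.det = 0 := by rw [hPdef, det_mul, h1, mul_zero]
    rwa [det_fin_two] at this
  have htr : p + s = 0 := by
    have h4 : M₂ * (P + 1) = M₁ + M₂ := by rw [Matrix.mul_add, hMP, Matrix.mul_one]
    have h6 : (P + 1).det = 1 := by
      have := congrArg Matrix.det h4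
      rwa [det_mul, h2, one_mul, h3] at this
    have h5 : (P + 1 : Matrix (Fin 2) (Fin 2) F) = !![p+1, q; r, s+1] := by
      rw [hPe, Matrix.one_fin_two]
      ext i j; fin_cases i <;> fin_cases j <;> simp
    rw [h5, det_fin_two_of] at h6
    linear_combination h6 - hdetP
  have hs : s = -p := by linear_combination htr
  have hqr : q * r = -(p * p) := by linear_combination p * hs - hdetP
  have main : ∀ g₂ : Matrix (Fin 2) (Fin 2) F, IsUnit g₂.det →
      P * g₂ = g₂ * !![0,0;1,0] → InH1Orbit F !![1,0;0,0] !![0,1;-1,0] M₁ M₂ := by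
    intro g₂ hg₂ hPg
    refine ⟨M₂ * g₂ * !![0,-1;1,0], g₂, ?_, hg₂, ?_, ?_, ?_⟩
    · rw [det_mul, det_mul, h2, one_mul, det_fin_two_of]
      simpa using hg₂
    · rw [det_mul, det_mul, h2, one_mul, det_fin_two_of]; ring
    · have h7 : M₁ * g₂ = M₂ * g₂ * !![0,-1;1,0] * !![1,0;0,0] := by
        rw [← hMP, Matrix.mul_assoc M₂ P g₂, hPg, Matrix.mul_assoc, Matrix.mul_assoc,
          Matrix.mul_fin_two]
        norm_num
      calc M₁ = M₁ * g₂ * g₂⁻¹ := (Matrix.mul_nonsing_inv_cancel_right _ _ hg₂).symm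
        _ = _ := by rw [h7]
    · have hww : (!![0,-1;1,0] : Matrix (Fin 2) (Fin 2) F) * !![0,1;-1,0] = 1 := by
        rw [Matrix.mul_fin_two, Matrix.one_fin_two]; norm_num
      calc M₂ = M₂ * g₂ * g₂⁻¹ := (Matrix.mul_nonsing_inv_cancel_right _ _ hg₂).symm
        _ = M₂ * g₂ * !![0,-1;1,0] * !![0,1;-1,0] * g₂⁻¹ := by
            rw [Matrix.mul_assoc (M₂ * g₂), hww, Matrix.mul_one]
  by_cases hr : r ≠ 0
  · refine main !![1, p; 0, r] ?_ ?_
    · rw [det_fin_two_of]; simpa using hr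
    · rw [hPe, Matrix.mul_fin_two, Matrix.mul_fin_two]
      ext i j
      fin_cases i <;> fin_cases j <;> simp <;>
        first
        | linear_combination hqr
        | linear_combination r * hs
  · push_neg at hr
    have hp : p = 0 := by
      have hpp : p * p = 0 := by rw [← neg_eq_zero, ← hqr, hr, mul_zero]
      rcases mul_eq_zero.mp hpp with h | h <;> exact h
    have hq : q ≠ 0 := by
      intro hq
      apply hne
      rw [← hMP, hPe, hp, hq, hr, hs, hp, neg_zero]
      ext i j; fin_cases i <;> fin_cases j <;> simp [Matrix.mul_apply, Fin.sum_univ_two]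
    refine main !![0, q; 1, 0] ?_ ?_
    · rw [det_fin_two_of]; simpa using hq
    · rw [hPe, hp, hs, hp, neg_zero, hr, Matrix.mul_fin_two, Matrix.mul_fin_two]
      norm_num

end aux

theorem stmt_2 (F : Type*) [Field F] (M₁ M₂ : Matrix (Fin 2) (Fin 2) F) :
    ((M₁.det = 0 ∧ M₂.det = 1 ∧ (M₁ + M₂).det = M₁.det + M₂.det) ↔
      (InH1Orbit F 0 1 M₁ M₂ ∨ InH1Orbit F !![1,0;0,0] !![0,1;-1,0] M₁ M₂)) ∧
    ¬ (InH1Orbit F 0 1 M₁ M₂ ∧ InH1Orbit F !![1,0;0,0] !![0,1;-1,0] M₁ M₂) := by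
  have orb1_M1 : InH1Orbit F 0 1 M₁ M₂ → M₁ = 0 := by
    rintro ⟨g₁, g₂, hu1, hu2, hd, hm1, hm2⟩
    rw [hm1, Matrix.mul_zero, Matrix.zero_mul]
  have orb2_M1 : InH1Orbit F !![1,0;0,0] !![0,1;-1,0] M₁ M₂ → M₁ ≠ 0 := by
    rintro ⟨g₁, g₂, hu1, hu2, hd, hm1, hm2⟩ h0
    rw [h0] at hm1
    have h5 : g₁⁻¹ * (g₁ * !![1,0;0,0] * g₂⁻¹) * g₂ = 0 := by rw [← hm1]; simp
    rw [← Matrix.mul_assoc, ← Matrix.mul_assoc, Matrix.nonsing_inv_mul _ hu1,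
      Matrix.one_mul, Matrix.nonsing_inv_mul_cancel_right _ _ hu2] at h5
    have := congrFun (congrFun h5 0) 0
    simp at this
  constructor
  · constructor
    · rintro ⟨h1, h2, h3⟩
      rw [h1, h2, zero_add] at h3
      by_cases hne : M₁ = 0
      · left
        refine ⟨M₂, 1, by rw [h2]; exact isUnit_one, by simp, by simp [h2], ?_, ?_⟩
        · rw [hne, Matrix.mul_zero, Matrix.zero_mul]
        · rw [Matrix.mul_one, inv_one, Matrix.mul_one]
      · right
        exact key_hard F h1 h2 h3 hne
    · rintro (⟨g₁, g₂, hu1, hu2, hd, hm1, hm2⟩ | ⟨g₁, g₂, hu1, hu2, hd, hm1, hm2⟩)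
      · rw [hm1, hm2]
        rw [Matrix.mul_zero, Matrix.zero_mul]
        have hdet1 : (g₁ * 1 * g₂⁻¹).det = 1 := by
          rw [det_conj_aux F hu1 hu2 hd, det_one]
        refine ⟨det_zero, hdet1, ?_⟩
        rw [zero_add, hdet1, det_zero, zero_add]
      · rw [hm1, hm2]
        have hA : (!![1,0;0,0] : Matrix (Fin 2) (Fin 2) F).det = 0 := by
          rw [det_fin_two_of]; ring
        have hB : (!![0,1;-1,0] : Matrix (Fin 2) (Fin 2) F).det = 1 := by
          rw [det_fin_two_of]; ring
        have hAB : (g₁ * !![1,0;0,0] * g₂⁻¹ + g₁ * !![0,1;-1,0] * g₂⁻¹)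
            = g₁ * (!![1,0;0,0] + !![0,1;-1,0]) * g₂⁻¹ := by
          rw [Matrix.mul_add, Matrix.add_mul]
        refine ⟨by rw [det_conj_aux F hu1 hu2 hd, hA], by rw [det_conj_aux F hu1 hu2 hd, hB], ?_⟩
        rw [hAB, det_conj_aux F hu1 hu2 hd, det_conj_aux F hu1 hu2 hd,
          det_conj_aux F hu1 hu2 hd, hA, hB]
        have hsum : (!![1,0;0,0] + !![0,1;-1,0] : Matrix (Fin 2) (Fin 2) F) = !![1,1;-1,0] := by
          ext i j; fin_cases i <;> fin_cases j <;> simp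
        rw [hsum, det_fin_two_of]; ring
  · rintro ⟨h1, h2⟩
    exact orb2_M1 h2 (orb1_M1 h1)
end

section
/- Let F be a field and let (g₁, g₂) ∈ GL₂(F) × GL₂(F) with det g₁ = det g₂. Then g₁ E₁₁ g₂⁻¹ = E₁₁ and g₁ w g₂⁻¹ = w hold if and only if there exist a ∈ F× and b ∈ F such that g₁ = [[a, b],[0, a]] and g₂ = [[a, 0],[−b, a]] (equivalently, g₂ = w⁻¹ g₁ w). In other words, the stabilizer of the pair (E₁₁, w) in H₁(F) consists of the pairs (u, w⁻¹ u w) where u ranges over the invertible upper-triangular matrices with equal diagonal entries. -/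
open Matrix

/-!
Once `g₂` is known to be invertible, the two equations say that `g₁` intertwines `E₁₁` and `w`
with `g₂`, i.e. `g₁ E₁₁ = E₁₁ g₂` and `g₁ w = w g₂`; comparing entries solves these linear
equations. Invertibility of `g₂` is forced by the first equation itself, since otherwise
`g₂⁻¹ = 0` and the left-hand side vanishes.
-/

theorem Matrix.isUnit_det_of_mul_nonsing_inv_eq {n R : Type*} [Fintype n] [DecidableEq n]
    [CommRing R] {A B C : Matrix n n R} (h : A * B⁻¹ = C) (hC : C ≠ 0) : IsUnit B.det := by
  by_contra hB
  rw [nonsing_inv_apply_not_isUnit B hB, mul_zero] at h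
  exact hC h.symm

theorem Matrix.mul_nonsing_inv_eq_iff_eq_mul {n R : Type*} [Fintype n] [DecidableEq n]
    [CommRing R] {A B C : Matrix n n R} (hB : IsUnit B.det) : A * B⁻¹ = C ↔ A = C * B :=
  letI := B.invertibleOfIsUnitDet hB
  mul_inv_eq_iff_eq_mul_of_invertible B A C

theorem Matrix.of_fin_two_eq_iff {α : Type*} (a b c d a' b' c' d' : α) :
    !![a, b; c, d] = !![a', b'; c', d'] ↔ a = a' ∧ b = b' ∧ c = c' ∧ d = d' := by
  simp [and_assoc]

theorem intertwines_E₁₁_w_iff {R : Type*} [CommRing R] (g₁ g₂ : Matrix (Fin 2) (Fin 2) R) :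
    (g₁ * !![1,0;0,0] = !![1,0;0,0] * g₂ ∧ g₁ * !![0,1;-1,0] = !![0,1;-1,0] * g₂) ↔
    ∃ a b : R, g₁ = !![a,b;0,a] ∧ g₂ = !![a,0;-b,a] := by
  obtain ⟨p, q, r, s, rfl⟩ : ∃ p q r s, g₁ = !![p,q;r,s] := ⟨_, _, _, _, eta_fin_two g₁⟩
  obtain ⟨p', q', r', s', rfl⟩ : ∃ p q r s, g₂ = !![p,q;r,s] := ⟨_, _, _, _, eta_fin_two g₂⟩
  simp only [mul_fin_two, of_fin_two_eq_iff, mul_one, mul_zero, add_zero, zero_add, zero_mul,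
    one_mul, neg_mul, mul_neg, neg_inj, and_true]
  constructor
  · rintro ⟨⟨rfl, rfl, rfl⟩, rfl, rfl, rfl, -⟩
    exact ⟨_, _, ⟨rfl, rfl, rfl, rfl⟩, rfl, rfl, rfl, rfl⟩
  · rintro ⟨a, b, ⟨rfl, rfl, rfl, rfl⟩, rfl, rfl, rfl, rfl⟩
    simp

theorem stmt_4_general (F : Type*) [Field F] (g₁ g₂ : Matrix (Fin 2) (Fin 2) F) :
    (g₁ * !![1,0;0,0] * g₂⁻¹ = !![1,0;0,0] ∧ g₁ * !![0,1;-1,0] * g₂⁻¹ = !![0,1;-1,0]) ↔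
    ∃ (a b : F), a ≠ 0 ∧ g₁ = !![a,b;0,a] ∧ g₂ = !![a,0;-b,a] := by
  have hE : (!![1,0;0,0] : Matrix (Fin 2) (Fin 2) F) ≠ 0 := fun h => by
    simpa using congrFun (congrFun h 0) 0
  have isUnit_det_iff (a b : F) : IsUnit (!![a,0;-b,a] : Matrix (Fin 2) (Fin 2) F).det ↔ a ≠ 0 := by
    simp [det_fin_two_of]
  constructor
  · rintro ⟨h₁, h₂⟩
    have hg₂ := isUnit_det_of_mul_nonsing_inv_eq h₁ hE
    rw [mul_nonsing_inv_eq_iff_eq_mul hg₂] at h₁ h₂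
    obtain ⟨a, b, rfl, rfl⟩ := (intertwines_E₁₁_w_iff g₁ g₂).mp ⟨h₁, h₂⟩
    exact ⟨a, b, (isUnit_det_iff a b).mp hg₂, rfl, rfl⟩
  · rintro ⟨a, b, ha, hg⟩
    have hg₂ : IsUnit g₂.det := hg.2 ▸ (isUnit_det_iff a b).mpr ha
    rw [mul_nonsing_inv_eq_iff_eq_mul hg₂, mul_nonsing_inv_eq_iff_eq_mul hg₂]
    exact (intertwines_E₁₁_w_iff g₁ g₂).mpr ⟨a, b, hg⟩

theorem stmt_4 (F : Type*) [Field F] (g₁ g₂ : Matrix (Fin 2) (Fin 2) F)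
    (hg₁ : IsUnit g₁.det) (hg₂ : IsUnit g₂.det) (hdet : g₁.det = g₂.det) :
    (g₁ * !![1,0;0,0] * g₂⁻¹ = !![1,0;0,0] ∧ g₁ * !![0,1;-1,0] * g₂⁻¹ = !![0,1;-1,0]) ↔
    ∃ (a b : F), a ≠ 0 ∧ g₁ = !![a,b;0,a] ∧ g₂ = !![a,0;-b,a] :=
  stmt_4_general F g₁ g₂
end

section
/- Let f be a complex-valued Schwartz function on M₂(ℝ) × M₂(ℝ). For ε > 0 define Ξ(ε) = ∫_ℝ ∫_ℝ f( [[ε⁻¹, ε⁻¹ v],[0, 0]], [[0, −u ε],[0, ε]] ) du dv. Then for every ε > 0 the integrand is absolutely integrable, and for every natural number N there is a constant C > 0 such that |Ξ(ε)| ≤ C · min(ε, ε⁻¹)^N for all ε > 0 (i.e. Ξ is rapidly decreasing both as ε → 0⁺ and as ε → ∞). -/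
open Matrix MeasureTheory Real
attribute [local instance] Matrix.frobeniusNormedAddCommGroup Matrix.frobeniusNormedSpace

abbrev M2 := Matrix (Fin 2) (Fin 2) ℝ

lemma entry_le_frob (A : M2) (i j : Fin 2) : ‖A i j‖ ≤ ‖A‖ := by
  rw [Matrix.frobenius_norm_def]
  have h1 : ‖A i j‖ = (‖A i j‖ ^ (2:ℝ)) ^ (1/2 : ℝ) := by
    rw [← Real.rpow_mul (by positivity)]
    norm_num
  rw [h1]
  apply Real.rpow_le_rpow (by positivity) _ (by norm_num)
  calc ‖A i j‖ ^ (2:ℝ) ≤ ∑ j', ‖A i j'‖ ^ (2:ℝ) := by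
        apply Finset.single_le_sum (f := fun j' => ‖A i j'‖ ^ (2:ℝ)) (fun _ _ => by positivity) (Finset.mem_univ j)
    _ ≤ ∑ i', ∑ j', ‖A i' j'‖ ^ (2:ℝ) := by
        apply Finset.single_le_sum (f := fun i' => ∑ j', ‖A i' j'‖ ^ (2:ℝ)) (fun _ _ => by positivity) (Finset.mem_univ i)

lemma int_scaled {a : ℝ} (ha : a ≠ 0) : Integrable (fun x : ℝ => (1 + (a*x)^2)⁻¹) :=
  integrable_inv_one_add_sq.comp_mul_left' ha

lemma integral_scaled {a : ℝ} (ha : 0 < a) : ∫ x : ℝ, (1 + (a*x)^2)⁻¹ = π * a⁻¹ := by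
  have := MeasureTheory.Measure.integral_comp_mul_left (fun y : ℝ => (1 + y^2)⁻¹) a
  rw [this, integral_univ_inv_one_add_sq, abs_of_pos (inv_pos.2 ha), smul_eq_mul]
  ring

lemma schwartz_bound (f : SchwartzMap (M2 × M2) ℂ) (k : ℕ) :
    ∃ D : ℝ, 0 ≤ D ∧ ∀ x, ‖f x‖ * (1+‖x‖)^k ≤ D := by
  refine ⟨2^k * (Finset.Iic (k,0)).sup (fun m => SchwartzMap.seminorm ℝ m.1 m.2) f, by positivity, fun x => ?_⟩
  have := SchwartzMap.one_add_le_sup_seminorm_apply (𝕜 := ℝ) (m := (k,0)) le_rfl le_rfl f x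
  simpa [norm_iteratedFDeriv_zero, mul_comm] using this

lemma arith {t M a b D F : ℝ} (hM : 0 < M) (ha : 0 ≤ a) (hb : 0 ≤ b)
    (hMt : M ≤ t) (hat : a ≤ t) (hbt : b ≤ t) (hF : 0 ≤ F) (N : ℕ)
    (hD : F * (1+t)^(N+4) ≤ D) :
    F ≤ D * (M⁻¹)^N * ((1+a^2)⁻¹ * (1+b^2)⁻¹) := by
  have ht : 0 ≤ t := hM.le.trans hMt
  have h1 : M^N * ((1+a^2) * (1+b^2)) ≤ (1+t)^(N+4) := by
    have e1 : (1+t)^(N+4) = (1+t)^N * ((1+t)^2 * (1+t)^2) := by ring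
    rw [e1]
    have hMN : M^N ≤ (1+t)^N := pow_le_pow_left₀ hM.le (by linarith) N
    have ha2 : 1+a^2 ≤ (1+t)^2 := by nlinarith
    have hb2 : 1+b^2 ≤ (1+t)^2 := by nlinarith
    have := mul_le_mul ha2 hb2 (by positivity) (by positivity)
    exact mul_le_mul hMN this (by positivity) (by positivity)
  have hpos : (0:ℝ) < M^N * ((1+a^2)*(1+b^2)) := by positivity
  have key : F * (M^N * ((1+a^2)*(1+b^2))) ≤ D :=
    le_trans (mul_le_mul_of_nonneg_left h1 hF) hD
  have h2 : F ≤ D / (M^N * ((1+a^2)*(1+b^2))) := (le_div_iff₀ hpos).2 key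
  calc F ≤ D / (M^N * ((1+a^2)*(1+b^2))) := h2
    _ = D * (M⁻¹)^N * ((1+a^2)⁻¹ * (1+b^2)⁻¹) := by
        rw [div_eq_mul_inv, mul_inv, mul_inv, ← inv_pow]; ring

lemma hrep (ε u v : ℝ) :
    ((!![ε⁻¹, ε⁻¹ * v; 0, 0], !![0, -u * ε; 0, ε]) : M2 × M2) =
      (!![ε⁻¹, 0; 0, 0], !![0,0;0,ε]) + u • ((0 : M2), !![0,-ε;0,0]) + v • (!![0,ε⁻¹;0,0], (0:M2)) := by
  refine Prod.ext ?_ ?_ <;>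
    · show _ = (_ : M2)
      ext i j
      fin_cases i <;> fin_cases j <;>
        simp [Matrix.add_apply, Matrix.smul_apply] <;> ring

lemma bounds_aux {ε : ℝ} (u v : ℝ) (hε : 0 < ε) :
    max ε ε⁻¹ ≤ ‖((!![ε⁻¹, ε⁻¹ * v; 0, 0], !![0, -u * ε; 0, ε]) : M2 × M2)‖ ∧
    ε * |u| ≤ ‖((!![ε⁻¹, ε⁻¹ * v; 0, 0], !![0, -u * ε; 0, ε]) : M2 × M2)‖ ∧
    ε⁻¹ * |v| ≤ ‖((!![ε⁻¹, ε⁻¹ * v; 0, 0], !![0, -u * ε; 0, ε]) : M2 × M2)‖ := by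
  set x : M2 × M2 := (!![ε⁻¹, ε⁻¹ * v; 0, 0], !![0, -u * ε; 0, ε]) with hx
  have h1 : ‖x.1‖ ≤ ‖x‖ := norm_fst_le x
  have h2 : ‖x.2‖ ≤ ‖x‖ := norm_snd_le x
  have e00 : ‖x.1 0 0‖ ≤ ‖x‖ := (entry_le_frob x.1 0 0).trans h1
  have e01 : ‖x.1 0 1‖ ≤ ‖x‖ := (entry_le_frob x.1 0 1).trans h1
  have e11 : ‖x.2 1 1‖ ≤ ‖x‖ := (entry_le_frob x.2 1 1).trans h2
  have e10 : ‖x.2 0 1‖ ≤ ‖x‖ := (entry_le_frob x.2 0 1).trans h2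
  have v00 : x.1 0 0 = ε⁻¹ := by simp [hx]
  have v01 : x.1 0 1 = ε⁻¹ * v := by simp [hx]
  have v11 : x.2 1 1 = ε := by simp [hx]
  have v10 : x.2 0 1 = -u * ε := by simp [hx]
  rw [v00] at e00; rw [v01] at e01; rw [v11] at e11; rw [v10] at e10
  rw [Real.norm_eq_abs, abs_of_pos (inv_pos.2 hε)] at e00
  rw [Real.norm_eq_abs, abs_of_pos hε] at e11
  rw [Real.norm_eq_abs, abs_mul, abs_of_pos (inv_pos.2 hε)] at e01
  rw [Real.norm_eq_abs, abs_mul, abs_neg, abs_of_pos hε, mul_comm] at e10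
  exact ⟨max_le e11 e00, e10, e01⟩

theorem stmt_9
    (f : SchwartzMap (Matrix (Fin 2) (Fin 2) ℝ × Matrix (Fin 2) (Fin 2) ℝ) ℂ) :
    (∀ ε : ℝ, 0 < ε →
      Integrable (fun uv : ℝ × ℝ =>
        f (!![ε⁻¹, ε⁻¹ * uv.2; 0, 0], !![0, -uv.1 * ε; 0, ε])) volume) ∧
    ∀ N : ℕ, ∃ C : ℝ, 0 < C ∧ ∀ ε : ℝ, 0 < ε →
      ‖∫ u : ℝ, ∫ v : ℝ, f (!![ε⁻¹, ε⁻¹ * v; 0, 0], !![0, -u * ε; 0, ε])‖ ≤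
        C * (min ε ε⁻¹) ^ N := by
  -- generic pointwise bound
  have main : ∀ (N : ℕ) {D : ℝ}, 0 ≤ D → (∀ x, ‖f x‖ * (1+‖x‖)^(N+4) ≤ D) →
      ∀ {ε : ℝ}, 0 < ε → ∀ u v : ℝ,
      ‖f (!![ε⁻¹, ε⁻¹ * v; 0, 0], !![0, -u * ε; 0, ε])‖ ≤
        D * (min ε ε⁻¹)^N * ((1+(ε*u)^2)⁻¹ * (1+(ε⁻¹*v)^2)⁻¹) := by
    intro N D hD0 hD ε hε u v
    obtain ⟨hb1, hb2, hb3⟩ := bounds_aux u v hε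
    have hM : 0 < max ε ε⁻¹ := lt_max_of_lt_left hε
    have h := arith hM (by positivity : (0:ℝ) ≤ ε * |u|) (by positivity : (0:ℝ) ≤ ε⁻¹ * |v|)
      hb1 hb2 hb3 (norm_nonneg _) N (hD _)
    have hmin : (max ε ε⁻¹)⁻¹ = min ε ε⁻¹ := by
      rcases le_total ε ε⁻¹ with h' | h'
      · rw [max_eq_right h', min_eq_left h', inv_inv]
      · rw [max_eq_left h', min_eq_right h']
    have ea : (ε * |u|)^2 = (ε * u)^2 := by rw [mul_pow, mul_pow, sq_abs]
    have eb : (ε⁻¹ * |v|)^2 = (ε⁻¹ * v)^2 := by rw [mul_pow, mul_pow, sq_abs]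
    rw [hmin, ea, eb] at h
    exact h
  obtain ⟨D₀, hD₀0, hD₀⟩ := schwartz_bound f 4
  have hD₀' : ∀ x, ‖f x‖ * (1+‖x‖)^(0+4) ≤ D₀ := by simpa using hD₀
  have hcont : ∀ ε : ℝ, Continuous (fun uv : ℝ × ℝ =>
      f (!![ε⁻¹, ε⁻¹ * uv.2; 0, 0], !![0, -uv.1 * ε; 0, ε])) := by
    intro ε
    apply f.continuous.comp
    have : (fun uv : ℝ × ℝ => ((!![ε⁻¹, ε⁻¹ * uv.2; 0, 0], !![0, -uv.1 * ε; 0, ε]) : M2 × M2)) =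
        fun uv : ℝ × ℝ => (!![ε⁻¹, 0; 0, 0], !![0,0;0,ε]) + uv.1 • ((0 : M2), !![0,-ε;0,0]) +
          uv.2 • (!![0,ε⁻¹;0,0], (0:M2)) := by
      funext uv; exact hrep ε uv.1 uv.2
    rw [this]
    exact ((continuous_const.add (continuous_fst.smul continuous_const)).add
      (continuous_snd.smul continuous_const))
  constructor
  · -- integrability
    intro ε hε
    have hinv : (ε⁻¹ : ℝ) ≠ 0 := (inv_pos.2 hε).ne'
    have hgint : Integrable (fun uv : ℝ × ℝ =>
        D₀ * ((1+(ε*uv.1)^2)⁻¹ * (1+(ε⁻¹*uv.2)^2)⁻¹)) volume := by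
      rw [show (volume : Measure (ℝ × ℝ)) = volume.prod volume from MeasureTheory.Measure.volume_eq_prod ℝ ℝ]
      exact ((int_scaled hε.ne').mul_prod (int_scaled hinv)).const_mul D₀
    refine hgint.mono' ((hcont ε).aestronglyMeasurable) ?_
    filter_upwards with uv
    have := main 0 hD₀0 hD₀' hε uv.1 uv.2
    simpa using this
  · -- decay
    intro N
    obtain ⟨D, hD0, hD⟩ := schwartz_bound f (N+4)
    refine ⟨D * π^2 + 1, by positivity, fun ε hε => ?_⟩
    have hinv : (0:ℝ) < ε⁻¹ := inv_pos.2 hε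
    set m := min ε ε⁻¹ with hm
    have hm0 : 0 ≤ m := le_min hε.le hinv.le
    have inner : ∀ u : ℝ, ‖∫ v : ℝ, f (!![ε⁻¹, ε⁻¹ * v; 0, 0], !![0, -u * ε; 0, ε])‖ ≤
        (D * m^N * π * ε) * (1+(ε*u)^2)⁻¹ := by
      intro u
      calc ‖∫ v : ℝ, f (!![ε⁻¹, ε⁻¹ * v; 0, 0], !![0, -u * ε; 0, ε])‖
          ≤ ∫ v : ℝ, ‖f (!![ε⁻¹, ε⁻¹ * v; 0, 0], !![0, -u * ε; 0, ε])‖ :=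
            norm_integral_le_integral_norm _
        _ ≤ ∫ v : ℝ, (D * m^N * (1+(ε*u)^2)⁻¹) * (1+(ε⁻¹*v)^2)⁻¹ := by
            apply integral_mono_of_nonneg (Filter.Eventually.of_forall fun v => norm_nonneg _)
              ((int_scaled hinv.ne').const_mul _)
            filter_upwards with v
            have := main N hD0 hD hε u v
            calc ‖f (!![ε⁻¹, ε⁻¹ * v; 0, 0], !![0, -u * ε; 0, ε])‖
                ≤ D * m^N * ((1+(ε*u)^2)⁻¹ * (1+(ε⁻¹*v)^2)⁻¹) := this
              _ = (D * m^N * (1+(ε*u)^2)⁻¹) * (1+(ε⁻¹*v)^2)⁻¹ := by ring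
        _ = (D * m^N * (1+(ε*u)^2)⁻¹) * (π * ε⁻¹⁻¹) := by
            rw [integral_const_mul, integral_scaled hinv]
        _ = (D * m^N * π * ε) * (1+(ε*u)^2)⁻¹ := by rw [inv_inv]; ring
    calc ‖∫ u : ℝ, ∫ v : ℝ, f (!![ε⁻¹, ε⁻¹ * v; 0, 0], !![0, -u * ε; 0, ε])‖
        ≤ ∫ u : ℝ, ‖∫ v : ℝ, f (!![ε⁻¹, ε⁻¹ * v; 0, 0], !![0, -u * ε; 0, ε])‖ :=
          norm_integral_le_integral_norm _
      _ ≤ ∫ u : ℝ, (D * m^N * π * ε) * (1+(ε*u)^2)⁻¹ := by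
          apply integral_mono_of_nonneg (Filter.Eventually.of_forall fun u => norm_nonneg _)
            ((int_scaled hε.ne').const_mul _)
          filter_upwards with u using inner u
      _ = (D * m^N * π * ε) * (π * ε⁻¹) := by rw [integral_const_mul, integral_scaled hε]
      _ = D * π^2 * m^N := by field_simp
      _ ≤ (D * π^2 + 1) * m^N := by
          have : (0:ℝ) ≤ m^N := pow_nonneg hm0 N
          nlinarith
end

section
/- Let f be a complex-valued Schwartz function on M₂(ℝ) × M₂(ℝ) and let σ ∈ ℝ. Then the integral ∫₀^∞ ∫_ℝ ∫_ℝ | f( [[ε⁻¹, ε⁻¹ v],[0, 0]], [[0, −u ε],[0, ε]] ) | · ε^σ du dv (dε/ε) is finite; i.e. the function (u, v, ε) ↦ f([[ε⁻¹, ε⁻¹v],[0,0]], [[0, −uε],[0, ε]])·ε^σ is absolutely integrable on ℝ × ℝ × (0, ∞) with respect to du dv dε/ε, for every value of σ. -/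
open Matrix MeasureTheory Real Set
open scoped ENNReal NNReal

attribute [local instance] Matrix.frobeniusNormedAddCommGroup Matrix.frobeniusNormedSpace

lemma mat_eq (a b c d : ℝ) : !![a,b;c,d] =
    a • !![(1:ℝ),0;0,0] + b • !![(0:ℝ),1;0,0] + c • !![(0:ℝ),0;1,0] + d • !![(0:ℝ),0;0,1] := by
  ext i j; fin_cases i <;> fin_cases j <;> simp

lemma cont_mat {α : Type*} [TopologicalSpace α] {a b c d : α → ℝ}
    (ha : Continuous a) (hb : Continuous b) (hc : Continuous c) (hd : Continuous d) :
    Continuous fun x => !![a x, b x; c x, d x] := by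
  have h : (fun x => !![a x, b x; c x, d x]) = fun x =>
      a x • !![(1:ℝ),0;0,0] + b x • !![(0:ℝ),1;0,0] + c x • !![(0:ℝ),0;1,0] + d x • !![(0:ℝ),0;0,1] :=
    funext fun x => mat_eq _ _ _ _
  rw [h]
  exact (((ha.smul continuous_const).add (hb.smul continuous_const)).add
    (hc.smul continuous_const)).add (hd.smul continuous_const)

lemma entry_le (A : Matrix (Fin 2) (Fin 2) ℝ) (i j : Fin 2) : |A i j| ≤ ‖A‖ := by
  rw [Matrix.frobenius_norm_def]
  have h1 : (|A i j| ^ (2:ℝ)) ^ (1/2 : ℝ) = |A i j| := by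
    rw [← Real.rpow_mul (abs_nonneg _)]
    norm_num
  rw [← h1]
  apply Real.rpow_le_rpow (Real.rpow_nonneg (abs_nonneg _) _) _ (by norm_num)
  have h2 : |A i j| ^ (2:ℝ) = ‖A i j‖ ^ (2:ℝ) := by rw [Real.norm_eq_abs]
  rw [h2]
  calc ‖A i j‖ ^ (2:ℝ) ≤ ∑ j', ‖A i j'‖ ^ (2:ℝ) :=
        Finset.single_le_sum (fun _ _ => Real.rpow_nonneg (norm_nonneg _) _) (Finset.mem_univ j)
    _ ≤ ∑ i', ∑ j', ‖A i' j'‖ ^ (2:ℝ) :=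
        Finset.single_le_sum (fun _ _ => Finset.sum_nonneg fun _ _ => Real.rpow_nonneg (norm_nonneg _) _) (Finset.mem_univ i)

lemma lint_phi {c : ℝ} (hc : c ≠ 0) :
    ∫⁻ t : ℝ, ENNReal.ofReal ((1 + (c*t)^2)⁻¹) = ENNReal.ofReal (π * |c|⁻¹) := by
  have hint : Integrable (fun t : ℝ => (1 + (c*t)^2)⁻¹) :=
    integrable_inv_one_add_sq.comp_mul_left' hc
  rw [← ofReal_integral_eq_lintegral_ofReal hint
    (Filter.Eventually.of_forall fun t => by positivity)]
  congr 1
  have := Measure.integral_comp_mul_left (fun x : ℝ => (1 + x^2)⁻¹) c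
  rw [this, integral_univ_inv_one_add_sq, smul_eq_mul, abs_inv, mul_comm]

-- integrability of ψ
lemma lint_psi (σ : ℝ) (K : ℕ) (hK : |σ| + 2 ≤ (K:ℝ)) :
    ∫⁻ ε in Ioi (0:ℝ), ENNReal.ofReal (((max 1 (max ε ε⁻¹))^K)⁻¹ * (ε^σ * ε⁻¹)) < ⊤ := by
  have hd : Disjoint (Ioc (0:ℝ) 1) (Ioi 1) := by
    rw [Set.disjoint_left]
    rintro x ⟨-, h1⟩ h2
    exact absurd h1 (not_le.2 h2)
  rw [← Ioc_union_Ioi_eq_Ioi (zero_le_one (α := ℝ)), lintegral_union measurableSet_Ioi hd]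
  refine ENNReal.add_lt_top.2 ⟨?_, ?_⟩
  · have hint : IntegrableOn (fun x : ℝ => x ^ ((K:ℝ) + σ - 1)) (Ioc 0 1) := by
      have h := (intervalIntegral.integrableOn_Ioo_rpow_iff zero_lt_one).2
        (show (-1:ℝ) < (K:ℝ) + σ - 1 by linarith [neg_abs_le σ])
      rwa [IntegrableOn, Measure.restrict_congr_set Ioo_ae_eq_Ioc] at h
    calc ∫⁻ ε in Ioc (0:ℝ) 1, ENNReal.ofReal (((max 1 (max ε ε⁻¹))^K)⁻¹ * (ε^σ * ε⁻¹))
        ≤ ∫⁻ ε in Ioc (0:ℝ) 1, ENNReal.ofReal (ε ^ ((K:ℝ) + σ - 1)) := by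
          apply lintegral_mono_ae
          rw [ae_restrict_iff' measurableSet_Ioc]
          refine Filter.Eventually.of_forall fun ε hε => ENNReal.ofReal_le_ofReal ?_
          obtain ⟨h0, h1⟩ := hε
          have hmax : ε⁻¹ ≤ max 1 (max ε ε⁻¹) := le_max_of_le_right (le_max_right _ _)
          have h2 : (ε⁻¹)^K ≤ (max 1 (max ε ε⁻¹))^K :=
            pow_le_pow_left₀ (inv_nonneg.2 h0.le) hmax K
          have h3 : ((max 1 (max ε ε⁻¹))^K)⁻¹ ≤ ((ε⁻¹)^K)⁻¹ :=
            inv_anti₀ (pow_pos (inv_pos.2 h0) K) h2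
          have h4 : ((ε⁻¹)^K)⁻¹ = ε^K := by rw [← inv_pow, inv_inv]
          calc ((max 1 (max ε ε⁻¹))^K)⁻¹ * (ε^σ * ε⁻¹) ≤ ε^K * (ε^σ * ε⁻¹) :=
                mul_le_mul_of_nonneg_right (h3.trans_eq h4) (by positivity)
            _ = ε ^ ((K:ℝ) + σ - 1) := by
                rw [← Real.rpow_natCast ε K, ← Real.rpow_neg_one ε, ← Real.rpow_add h0,
                  ← Real.rpow_add h0]
                congr 1; ring
      _ < ⊤ := hint.lintegral_lt_top
  · have hint : IntegrableOn (fun x : ℝ => x ^ (σ - 1 - (K:ℝ))) (Ioi 1) :=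
      (integrableOn_Ioi_rpow_iff zero_lt_one).2
        (show σ - 1 - (K:ℝ) < -1 by linarith [le_abs_self σ])
    calc ∫⁻ ε in Ioi (1:ℝ), ENNReal.ofReal (((max 1 (max ε ε⁻¹))^K)⁻¹ * (ε^σ * ε⁻¹))
        ≤ ∫⁻ ε in Ioi (1:ℝ), ENNReal.ofReal (ε ^ (σ - 1 - (K:ℝ))) := by
          apply lintegral_mono_ae
          rw [ae_restrict_iff' measurableSet_Ioi]
          refine Filter.Eventually.of_forall fun ε hε => ENNReal.ofReal_le_ofReal ?_
          have h0 : (0:ℝ) < ε := lt_trans zero_lt_one hε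
          have hmax : ε ≤ max 1 (max ε ε⁻¹) := le_max_of_le_right (le_max_left _ _)
          have h2 : ε^K ≤ (max 1 (max ε ε⁻¹))^K := pow_le_pow_left₀ h0.le hmax K
          have h3 : ((max 1 (max ε ε⁻¹))^K)⁻¹ ≤ (ε^K)⁻¹ :=
            inv_anti₀ (pow_pos h0 K) h2
          calc ((max 1 (max ε ε⁻¹))^K)⁻¹ * (ε^σ * ε⁻¹) ≤ (ε^K)⁻¹ * (ε^σ * ε⁻¹) :=
                mul_le_mul_of_nonneg_right h3 (by positivity)
            _ = ε ^ (σ - 1 - (K:ℝ)) := by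
                rw [← Real.rpow_natCast ε K, ← Real.rpow_neg h0.le, ← Real.rpow_neg_one ε,
                  ← Real.rpow_add h0, ← Real.rpow_add h0]
                congr 1; ring
      _ < ⊤ := hint.lintegral_lt_top


theorem stmt_10
    (f : SchwartzMap (Matrix (Fin 2) (Fin 2) ℝ × Matrix (Fin 2) (Fin 2) ℝ) ℂ)
    (σ : ℝ) :
    Integrable
      (fun x : ℝ × ℝ × ℝ =>
        f (!![x.2.2⁻¹, x.2.2⁻¹ * x.2.1; 0, 0], !![0, -x.1 * x.2.2; 0, x.2.2]) *
          ((x.2.2 ^ σ : ℝ) : ℂ))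
      ((volume : Measure ℝ).prod ((volume : Measure ℝ).prod
        (((volume : Measure ℝ).restrict (Set.Ioi 0)).withDensity
          fun ε => ENNReal.ofReal ε⁻¹))) := by
  -- abbreviations
  set μw := (((volume : Measure ℝ).restrict (Set.Ioi 0)).withDensity
      fun ε => ENNReal.ofReal ε⁻¹) with hμw
  set M : ℝ × ℝ × ℝ → Matrix (Fin 2) (Fin 2) ℝ × Matrix (Fin 2) (Fin 2) ℝ :=
    fun x => (!![x.2.2⁻¹, x.2.2⁻¹ * x.2.1; 0, 0], !![0, -x.1 * x.2.2; 0, x.2.2]) with hM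
  set F : ℝ × ℝ × ℝ → ℂ := fun x => f (M x) * ((x.2.2 ^ σ : ℝ) : ℂ) with hF
  -- measurability
  have hg : Continuous fun p : ℝ × ℝ × ℝ × ℝ =>
      f (!![p.1, p.2.1; 0, 0], !![0, p.2.2.1; 0, p.2.2.2]) := by
    apply f.continuous.comp
    apply Continuous.prodMk
    · exact cont_mat continuous_fst (continuous_fst.comp continuous_snd)
        continuous_const continuous_const
    · exact cont_mat continuous_const
        (continuous_fst.comp (continuous_snd.comp continuous_snd))
        continuous_const (continuous_snd.comp (continuous_snd.comp continuous_snd))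
  have hq : Measurable fun x : ℝ × ℝ × ℝ =>
      ((x.2.2⁻¹, (x.2.2⁻¹ * x.2.1, (-x.1 * x.2.2, x.2.2))) : ℝ × ℝ × ℝ × ℝ) := by
    have h22 : Measurable fun x : ℝ × ℝ × ℝ => x.2.2 := measurable_snd.snd
    have h21 : Measurable fun x : ℝ × ℝ × ℝ => x.2.1 := measurable_snd.fst
    exact (h22.inv).prodMk (((h22.inv).mul h21).prodMk
      (((measurable_fst.neg).mul h22).prodMk h22))
  have hfM : Measurable fun x : ℝ × ℝ × ℝ => f (M x) := hg.measurable.comp hq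
  have hFmeas : Measurable F :=
    hfM.mul (Complex.measurable_ofReal.comp ((measurable_snd.snd).pow measurable_const))
  refine ⟨hFmeas.aestronglyMeasurable, ?_⟩
  rw [hasFiniteIntegral_iff_norm]
  -- constants
  set K : ℕ := ⌈|σ|⌉₊ + 2 with hKdef
  have hK : |σ| + 2 ≤ (K : ℝ) := by
    have := Nat.le_ceil |σ|
    push_cast [hKdef]
    linarith
  set C : ℝ := 2 ^ (4 + K) *
    ((Finset.Iic (4 + K, 0)).sup (fun m => SchwartzMap.seminorm ℝ m.1 m.2)) f with hCdef
  have hC : ∀ y, (1 + ‖y‖) ^ (4 + K) * ‖f y‖ ≤ C := fun y => by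
    simpa [norm_iteratedFDeriv_zero] using
      SchwartzMap.one_add_le_sup_seminorm_apply (m := (4 + K, 0)) (k := 4 + K) (n := 0)
        le_rfl le_rfl f y
  have hC0 : 0 ≤ C := le_trans (by positivity) (hC 0)
  -- the pointwise bound
  have hbound : ∀ u v ε : ℝ, 0 < ε →
      ‖f (M (u, v, ε))‖ ≤ C * ((1 + (ε*u)^2)⁻¹ *
        ((1 + (ε⁻¹*v)^2)⁻¹ * ((max 1 (max ε ε⁻¹))^K)⁻¹)) := by
    intro u v ε hε
    set y := M (u, v, ε) with hy
    set n := ‖y‖ with hn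
    have hn0 : 0 ≤ n := norm_nonneg _
    have hA : ‖y.1‖ ≤ n := norm_fst_le y
    have hB : ‖y.2‖ ≤ n := norm_snd_le y
    have hεn : ε ≤ n := by
      have := entry_le y.2 1 1
      simp only [hy, hM] at this
      rw [show (!![0, -u * ε; 0, ε] : Matrix (Fin 2) (Fin 2) ℝ) 1 1 = ε by simp] at this
      calc ε ≤ |ε| := le_abs_self ε
        _ ≤ ‖y.2‖ := this
        _ ≤ n := hB
    have hinvn : ε⁻¹ ≤ n := by
      have := entry_le y.1 0 0
      simp only [hy, hM] at this
      rw [show (!![ε⁻¹, ε⁻¹ * v; 0, 0] : Matrix (Fin 2) (Fin 2) ℝ) 0 0 = ε⁻¹ by simp] at this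
      calc ε⁻¹ ≤ |ε⁻¹| := le_abs_self _
        _ ≤ ‖y.1‖ := this
        _ ≤ n := hA
    have hun : (ε*u)^2 ≤ n^2 := by
      have h := entry_le y.2 0 1
      simp only [hy, hM] at h
      rw [show (!![0, -u * ε; 0, ε] : Matrix (Fin 2) (Fin 2) ℝ) 0 1 = -u * ε by simp] at h
      have h2 : |ε*u| ≤ n := by
        rw [show |ε*u| = |-u*ε| by rw [abs_mul, abs_mul, abs_neg, mul_comm]]
        exact h.trans hB
      calc (ε*u)^2 = |ε*u|^2 := (sq_abs _).symm
        _ ≤ n^2 := by nlinarith [abs_nonneg (ε*u)]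
    have hvn : (ε⁻¹*v)^2 ≤ n^2 := by
      have h := entry_le y.1 0 1
      simp only [hy, hM] at h
      rw [show (!![ε⁻¹, ε⁻¹ * v; 0, 0] : Matrix (Fin 2) (Fin 2) ℝ) 0 1 = ε⁻¹ * v by simp] at h
      have h2 : |ε⁻¹*v| ≤ n := h.trans hA
      calc (ε⁻¹*v)^2 = |ε⁻¹*v|^2 := (sq_abs _).symm
        _ ≤ n^2 := by nlinarith [abs_nonneg (ε⁻¹*v)]
    have h1 : 1 + (ε*u)^2 ≤ (1+n)^2 := by nlinarith
    have h2 : 1 + (ε⁻¹*v)^2 ≤ (1+n)^2 := by nlinarith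
    have h3 : max 1 (max ε ε⁻¹) ≤ 1 + n :=
      max_le (by linarith) (max_le (by linarith) (by linarith))
    have h3' : (max 1 (max ε ε⁻¹))^K ≤ (1+n)^K := by
      apply pow_le_pow_left₀ _ h3
      positivity
    have hprod : (1 + (ε*u)^2) * ((1 + (ε⁻¹*v)^2) * (max 1 (max ε ε⁻¹))^K)
        ≤ (1+n)^(4+K) := by
      calc (1 + (ε*u)^2) * ((1 + (ε⁻¹*v)^2) * (max 1 (max ε ε⁻¹))^K)
          ≤ (1+n)^2 * ((1+n)^2 * (1+n)^K) := by
            apply mul_le_mul h1 _ (by positivity) (by positivity)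
            apply mul_le_mul h2 h3' (by positivity) (by positivity)
        _ = (1+n)^(4+K) := by ring
    have hfinal : ‖f y‖ * ((1 + (ε*u)^2) * ((1 + (ε⁻¹*v)^2) * (max 1 (max ε ε⁻¹))^K)) ≤ C := by
      calc ‖f y‖ * ((1 + (ε*u)^2) * ((1 + (ε⁻¹*v)^2) * (max 1 (max ε ε⁻¹))^K))
          ≤ ‖f y‖ * (1+n)^(4+K) := mul_le_mul_of_nonneg_left hprod (norm_nonneg _)
        _ = (1+n)^(4+K) * ‖f y‖ := by ring
        _ ≤ C := hC y
    have hbpos : 0 < (1 + (ε*u)^2) * ((1 + (ε⁻¹*v)^2) * (max 1 (max ε ε⁻¹))^K) := by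
      have : (0:ℝ) < max 1 (max ε ε⁻¹) := lt_of_lt_of_le zero_lt_one (le_max_left _ _)
      positivity
    rw [show (1 + (ε*u)^2)⁻¹ * ((1 + (ε⁻¹*v)^2)⁻¹ * ((max 1 (max ε ε⁻¹))^K)⁻¹)
      = ((1 + (ε*u)^2) * ((1 + (ε⁻¹*v)^2) * (max 1 (max ε ε⁻¹))^K))⁻¹ by
        rw [mul_inv, mul_inv]]
    rw [← div_eq_mul_inv, le_div_iff₀ hbpos]
    exact hfinal
  -- the dominating weight in ε
  set ψ : ℝ → ℝ := fun ε => ((max 1 (max ε ε⁻¹))^K)⁻¹ * (ε^σ * ε⁻¹) with hψdef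
  have hψ0 : ∀ ε : ℝ, 0 < ε → 0 ≤ ψ ε := fun ε hε =>
    mul_nonneg (inv_nonneg.2 (pow_nonneg (le_trans zero_le_one (le_max_left _ _)) _))
      (mul_nonneg (rpow_nonneg hε.le σ) (inv_nonneg.2 hε.le))
  have hψm : Measurable ψ :=
    (((measurable_const.max (measurable_id.max measurable_inv)).pow_const K).inv).mul
      ((measurable_id.pow measurable_const).mul measurable_inv)
  set cC : ℝ≥0∞ := ENNReal.ofReal C with hcC
  -- pointwise key inequality in ℝ≥0∞
  have key : ∀ u v ε : ℝ, 0 < ε →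
      ENNReal.ofReal ε⁻¹ * ENNReal.ofReal ‖F (u, v, ε)‖ ≤
        cC * ENNReal.ofReal (ψ ε) * ENNReal.ofReal ((1 + (ε*u)^2)⁻¹) *
          ENNReal.ofReal ((1 + (ε⁻¹*v)^2)⁻¹) := by
    intro u v ε hε
    have hφu : (0:ℝ) ≤ (1 + (ε*u)^2)⁻¹ := by positivity
    have hφv : (0:ℝ) ≤ (1 + (ε⁻¹*v)^2)⁻¹ := by positivity
    rw [← ENNReal.ofReal_mul (inv_nonneg.2 hε.le), hcC,
      ← ENNReal.ofReal_mul hC0, ← ENNReal.ofReal_mul (mul_nonneg hC0 (hψ0 ε hε)),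
      ← ENNReal.ofReal_mul (mul_nonneg (mul_nonneg hC0 (hψ0 ε hε)) hφu)]
    apply ENNReal.ofReal_le_ofReal
    have hnorm : ‖F (u, v, ε)‖ = ‖f (M (u, v, ε))‖ * ε ^ σ := by
      rw [hF]
      simp only [norm_mul, Complex.norm_real, Real.norm_eq_abs]
      rw [abs_of_nonneg (rpow_nonneg hε.le σ)]
    rw [hnorm]
    calc ε⁻¹ * (‖f (M (u, v, ε))‖ * ε ^ σ)
        ≤ ε⁻¹ * ((C * ((1 + (ε*u)^2)⁻¹ *
            ((1 + (ε⁻¹*v)^2)⁻¹ * ((max 1 (max ε ε⁻¹))^K)⁻¹))) * ε ^ σ) := by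
          apply mul_le_mul_of_nonneg_left _ (inv_nonneg.2 hε.le)
          exact mul_le_mul_of_nonneg_right (hbound u v ε hε) (rpow_nonneg hε.le σ)
      _ = C * ψ ε * (1 + (ε*u)^2)⁻¹ * (1 + (ε⁻¹*v)^2)⁻¹ := by rw [hψdef]; ring
  -- measurability for the two Tonelli swaps
  have hmeas1 : ∀ u : ℝ, AEMeasurable (Function.uncurry fun v ε : ℝ =>
      cC * ENNReal.ofReal (ψ ε) * ENNReal.ofReal ((1 + (ε*u)^2)⁻¹) *
        ENNReal.ofReal ((1 + (ε⁻¹*v)^2)⁻¹))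
      (volume.prod (volume.restrict (Ioi 0))) := by
    intro u
    apply Measurable.aemeasurable
    refine Measurable.mul (Measurable.mul (measurable_const.mul
      ((hψm.comp measurable_snd).ennreal_ofReal)) ?_) ?_
    · exact ((measurable_const.add (((measurable_snd.mul_const u)).pow_const 2)).inv).ennreal_ofReal
    · exact ((measurable_const.add (((measurable_snd.inv.mul measurable_fst)).pow_const 2)).inv).ennreal_ofReal
  have hmeas2 : AEMeasurable (Function.uncurry fun u ε : ℝ =>
      (cC * ENNReal.ofReal (ψ ε) * ENNReal.ofReal (π * ε)) *
        ENNReal.ofReal ((1 + (ε*u)^2)⁻¹))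
      (volume.prod (volume.restrict (Ioi 0))) := by
    apply Measurable.aemeasurable
    refine Measurable.mul (Measurable.mul (measurable_const.mul
      ((hψm.comp measurable_snd).ennreal_ofReal)) ?_) ?_
    · exact ((measurable_snd.const_mul π)).ennreal_ofReal
    · exact ((measurable_const.add (((measurable_snd.mul measurable_fst)).pow_const 2)).inv).ennreal_ofReal
  have hne1 : ∀ (a b : ℝ≥0∞), a ≠ ⊤ → b ≠ ⊤ → a * b ≠ ⊤ := fun a b ha hb => ENNReal.mul_ne_top ha hb
  -- main computation
  calc ∫⁻ a, ENNReal.ofReal ‖F a‖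
        ∂((volume : Measure ℝ).prod ((volume : Measure ℝ).prod μw))
      = ∫⁻ u, ∫⁻ v, ∫⁻ ε, ENNReal.ofReal ‖F (u, v, ε)‖ ∂μw ∂volume ∂volume := by
        rw [lintegral_prod _ (hFmeas.norm.ennreal_ofReal).aemeasurable]
        exact lintegral_congr fun u =>
          lintegral_prod _ ((hFmeas.comp measurable_prodMk_left).norm.ennreal_ofReal).aemeasurable
    _ = ∫⁻ u, ∫⁻ v, ∫⁻ ε in Ioi (0:ℝ),
          ENNReal.ofReal ε⁻¹ * ENNReal.ofReal ‖F (u, v, ε)‖ ∂volume ∂volume := by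
        refine lintegral_congr fun u => lintegral_congr fun v => ?_
        rw [hμw]
        exact lintegral_withDensity_eq_lintegral_mul _ (measurable_inv.ennreal_ofReal)
          ((hFmeas.comp ((measurable_const.prodMk (measurable_const.prodMk
            measurable_id)) : Measurable fun ε : ℝ => ((u, v, ε) : ℝ × ℝ × ℝ))).norm.ennreal_ofReal)
    _ ≤ ∫⁻ u, ∫⁻ v, ∫⁻ ε in Ioi (0:ℝ),
          cC * ENNReal.ofReal (ψ ε) * ENNReal.ofReal ((1 + (ε*u)^2)⁻¹) *
            ENNReal.ofReal ((1 + (ε⁻¹*v)^2)⁻¹) ∂volume ∂volume := by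
        refine lintegral_mono fun u => lintegral_mono fun v => lintegral_mono_ae ?_
        rw [ae_restrict_iff' measurableSet_Ioi]
        exact Filter.Eventually.of_forall fun ε hε => key u v ε hε
    _ = ∫⁻ u, ∫⁻ ε in Ioi (0:ℝ),
          (cC * ENNReal.ofReal (ψ ε) * ENNReal.ofReal (π * ε)) *
            ENNReal.ofReal ((1 + (ε*u)^2)⁻¹) ∂volume := by
        refine lintegral_congr fun u => ?_
        rw [lintegral_lintegral_swap (hmeas1 u)]
        refine lintegral_congr_ae ?_
        filter_upwards [self_mem_ae_restrict measurableSet_Ioi] with ε hε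
        rw [lintegral_const_mul' _ _ (hne1 _ _ (hne1 _ _ ENNReal.ofReal_ne_top
          ENNReal.ofReal_ne_top) ENNReal.ofReal_ne_top)]
        rw [lint_phi (inv_ne_zero (ne_of_gt hε)), abs_of_pos (inv_pos.2 hε), inv_inv]
        rw [← hcC]
        ring
    _ = ∫⁻ ε in Ioi (0:ℝ), ∫⁻ u,
          (cC * ENNReal.ofReal (ψ ε) * ENNReal.ofReal (π * ε)) *
            ENNReal.ofReal ((1 + (ε*u)^2)⁻¹) ∂volume := lintegral_lintegral_swap hmeas2
    _ = ∫⁻ ε in Ioi (0:ℝ), (cC * ENNReal.ofReal (π * π)) * ENNReal.ofReal (ψ ε) := by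
        refine lintegral_congr_ae ?_
        filter_upwards [self_mem_ae_restrict measurableSet_Ioi] with ε hε
        rw [lintegral_const_mul' _ _ (hne1 _ _ (hne1 _ _ ENNReal.ofReal_ne_top
          ENNReal.ofReal_ne_top) ENNReal.ofReal_ne_top)]
        have hε0 : (0:ℝ) < ε := hε
        rw [lint_phi (ne_of_gt hε0), abs_of_pos hε0]
        rw [← hcC]
        have hXY : ENNReal.ofReal (π * ε) * ENNReal.ofReal (π * ε⁻¹) = ENNReal.ofReal (π * π) := by
          rw [← ENNReal.ofReal_mul (by positivity)]
          congr 1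
          field_simp
        calc cC * ENNReal.ofReal (ψ ε) * ENNReal.ofReal (π * ε) * ENNReal.ofReal (π * ε⁻¹)
            = cC * (ENNReal.ofReal (π * ε) * ENNReal.ofReal (π * ε⁻¹)) * ENNReal.ofReal (ψ ε) := by
              ring
          _ = (cC * ENNReal.ofReal (π * π)) * ENNReal.ofReal (ψ ε) := by rw [hXY]
    _ = (cC * ENNReal.ofReal (π * π)) * ∫⁻ ε in Ioi (0:ℝ), ENNReal.ofReal (ψ ε) :=
        lintegral_const_mul' _ _ (hne1 _ _ ENNReal.ofReal_ne_top ENNReal.ofReal_ne_top)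
    _ < ⊤ := ENNReal.mul_lt_top
        (ENNReal.mul_lt_top ENNReal.ofReal_lt_top ENNReal.ofReal_lt_top)
        (lint_psi σ K hK)
end

section
/- For every complex-valued Schwartz function f on ℝⁿ there exists a real-valued nonnegative Schwartz function g on ℝⁿ such that |f(x)| ≤ g(x) for all x ∈ ℝⁿ (the absolute value of a Schwartz function is bounded by a Schwartz function). -/
open MeasureTheory Metric Function
open scoped Convolution ContDiff

namespace Stmt11Aux

variable {n : ℕ}

local notation "E" => (Fin n → ℝ)

lemma conv_isometry {F G : Type} [NormedAddCommGroup F] [NormedSpace ℝ F] [CompleteSpace F]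
    [NormedAddCommGroup G] [NormedSpace ℝ G] [CompleteSpace G]
    (A : F ≃ₗᵢ[ℝ] G) (W : E → ℝ) (h : E → F) (x : E) :
    (W ⋆[ContinuousLinearMap.lsmul ℝ ℝ, volume] (⇑A ∘ h)) x
      = A ((W ⋆[ContinuousLinearMap.lsmul ℝ ℝ, volume] h) x) := by
  simp_rw [convolution_def]
  simp_rw [ContinuousLinearMap.lsmul_apply]
  simp_rw [comp_apply]
  have h2 := A.toLinearIsometry.integral_comp_comm (μ := volume) fun t => W t • h (x - t)
  simp only [LinearIsometryEquiv.coe_toLinearIsometry] at h2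
  rw [← h2]
  simp_rw [_root_.map_smul]

lemma lsmul_precompR {F : Type} [NormedAddCommGroup F] [NormedSpace ℝ F] :
    (ContinuousLinearMap.lsmul ℝ ℝ : ℝ →L[ℝ] F →L[ℝ] F).precompR E
      = (ContinuousLinearMap.lsmul ℝ ℝ : ℝ →L[ℝ] (E →L[ℝ] F) →L[ℝ] (E →L[ℝ] F)) := by
  refine ContinuousLinearMap.ext fun r => ContinuousLinearMap.ext fun T =>
    ContinuousLinearMap.ext fun v => ?_
  simp

lemma conv_iteratedFDeriv {W : E → ℝ} (hW : LocallyIntegrable W volume) (k : ℕ) :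
    ∀ {F : Type} [NormedAddCommGroup F] [NormedSpace ℝ F] [CompleteSpace F]
      (ρ : E → F), ContDiff ℝ ∞ ρ → HasCompactSupport ρ → ∀ x : E,
      iteratedFDeriv ℝ k (W ⋆[ContinuousLinearMap.lsmul ℝ ℝ, volume] ρ) x
        = (W ⋆[ContinuousLinearMap.lsmul ℝ ℝ, volume] iteratedFDeriv ℝ k ρ) x := by
  induction k with
  | zero =>
    intro F _ _ _ ρ h1 h2 x
    have h0 : iteratedFDeriv ℝ 0 ρ
        = ⇑(continuousMultilinearCurryFin0 ℝ E F).symm ∘ ρ := iteratedFDeriv_zero_eq_comp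
    rw [h0, conv_isometry, iteratedFDeriv_zero_eq_comp]
    rfl
  | succ k ih =>
    intro F _ _ _ ρ h1 h2 x
    have hfd : fderiv ℝ (W ⋆[ContinuousLinearMap.lsmul ℝ ℝ, volume] ρ)
        = (W ⋆[ContinuousLinearMap.lsmul ℝ ℝ, volume] fderiv ℝ ρ) := by
      funext y
      have := (h2.hasFDerivAt_convolution_right (ContinuousLinearMap.lsmul ℝ ℝ) hW
        (h1.of_le (by norm_num)) y).fderiv
      rw [this, lsmul_precompR]
    have hsucc : iteratedFDeriv ℝ (k + 1) ρ
        = ⇑(continuousMultilinearCurryRightEquiv' ℝ k E F).symm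
            ∘ iteratedFDeriv ℝ k (fderiv ℝ ρ) := by
      funext y
      exact iteratedFDeriv_succ_eq_comp_right
    rw [iteratedFDeriv_succ_eq_comp_right, comp_apply, hfd,
      ih (fderiv ℝ ρ) (h1.fderiv_right (le_of_eq (by simp))) (h2.fderiv ℝ) x, hsucc]
    exact (conv_isometry (continuousMultilinearCurryRightEquiv' ℝ k (Fin n → ℝ) F).symm W
      (iteratedFDeriv ℝ k (fderiv ℝ ρ)) x).symm

end Stmt11Aux

set_option maxHeartbeats 1000000 in
open Stmt11Aux ContinuousLinearMap in
theorem stmt_11 (n : ℕ) (f : SchwartzMap (Fin n → ℝ) ℂ) :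
    ∃ g : SchwartzMap (Fin n → ℝ) ℝ,
      (∀ x, 0 ≤ g x) ∧ ∀ x, ‖f x‖ ≤ g x := by
  classical
  obtain ⟨C₀, hC₀pos, hC₀⟩ := f.decay 0 0
  have hC₀' : ∀ y, ‖f y‖ ≤ C₀ := fun y => by
    simpa [norm_iteratedFDeriv_zero] using hC₀ y
  set M : ℝ → ℝ := fun t => sSup ((fun y : Fin n → ℝ => ‖f y‖) '' {y | t ≤ ‖y‖}) with hM
  have hbdd : ∀ t, BddAbove ((fun y : Fin n → ℝ => ‖f y‖) '' {y | t ≤ ‖y‖}) := fun t =>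
    ⟨C₀, by rintro - ⟨y, -, rfl⟩; exact hC₀' y⟩
  have hM_nonneg : ∀ t, 0 ≤ M t := fun t =>
    Real.sSup_nonneg (by rintro - ⟨y, -, rfl⟩; exact norm_nonneg _)
  have hM_le : ∀ {t : ℝ} {y : Fin n → ℝ}, t ≤ ‖y‖ → ‖f y‖ ≤ M t := fun {t y} ht =>
    le_csSup (hbdd t) ⟨y, ht, rfl⟩
  have hM_anti : Antitone M := by
    intro s t hst
    refine Real.sSup_le ?_ (hM_nonneg s)
    rintro - ⟨y, hy, rfl⟩
    exact hM_le (hst.trans hy)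
  have hM_leC₀ : ∀ t, M t ≤ C₀ := fun t =>
    Real.sSup_le (by rintro - ⟨y, -, rfl⟩; exact hC₀' y) hC₀pos.le
  set W : (Fin n → ℝ) → ℝ := fun y => M (‖y‖ - 1) with hWdef
  have hW_nonneg : ∀ y, 0 ≤ W y := fun y => hM_nonneg _
  have hW_meas : Measurable W := hM_anti.measurable.comp (measurable_norm.sub measurable_const)
  have hW_loc : LocallyIntegrable W volume := by
    rw [MeasureTheory.locallyIntegrable_iff]
    intro K hK
    refine Measure.integrableOn_of_bounded (M := C₀) hK.measure_lt_top.ne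
      hW_meas.aestronglyMeasurable ?_
    exact ae_of_all _ fun y => by
      rw [Real.norm_eq_abs, abs_of_nonneg (hW_nonneg y)]; exact hM_leC₀ _
  -- the bump function
  set φ : ContDiffBump (0 : Fin n → ℝ) := ⟨1/2, 1, by norm_num, by norm_num⟩ with hφ
  set ρ : (Fin n → ℝ) → ℝ := φ.normed volume with hρ
  have hρ_smooth : ContDiff ℝ ∞ ρ := φ.contDiff_normed
  have hρ_supp : HasCompactSupport ρ := φ.hasCompactSupport_normed
  have hρ_nonneg : ∀ y, 0 ≤ ρ y := fun y => φ.nonneg_normed y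
  have hρ_tsupp : tsupport ρ ⊆ Metric.closedBall 0 1 := by
    rw [hρ, φ.tsupport_normed_eq]
  -- facts about iterated derivatives of ρ
  have hρk_cont : ∀ k : ℕ, Continuous (iteratedFDeriv ℝ k ρ) := fun k =>
    hρ_smooth.continuous_iteratedFDeriv (mod_cast le_top)
  have hρk_supp : ∀ k : ℕ, HasCompactSupport (iteratedFDeriv ℝ k ρ) := fun k =>
    hρ_supp.iteratedFDeriv k
  have hρk_int : ∀ k : ℕ, Integrable (iteratedFDeriv ℝ k ρ) := fun k =>
    (hρk_cont k).integrable_of_hasCompactSupport (hρk_supp k)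
  have hρk_conv : ∀ (k : ℕ), ConvolutionExists W (iteratedFDeriv ℝ k ρ)
      (ContinuousLinearMap.lsmul ℝ ℝ) volume := fun k =>
    (hρk_supp k).convolutionExists_right _ hW_loc (hρk_cont k)
  -- the key pointwise bound for all iterated derivatives
  have key : ∀ (k : ℕ) (x : Fin n → ℝ),
      ‖(W ⋆[ContinuousLinearMap.lsmul ℝ ℝ, volume] iteratedFDeriv ℝ k ρ) x‖
        ≤ M (‖x‖ - 2) * ∫ t, ‖iteratedFDeriv ℝ k ρ t‖ := by
    intro k x
    rw [convolution_def]
    have step1 : ‖∫ t, ContinuousLinearMap.lsmul ℝ ℝ (W t) (iteratedFDeriv ℝ k ρ (x - t))‖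
        ≤ ∫ t, ‖ContinuousLinearMap.lsmul ℝ ℝ (W t) (iteratedFDeriv ℝ k ρ (x - t))‖ :=
      norm_integral_le_integral_norm _
    refine step1.trans ?_
    have step2 : ∫ t, ‖ContinuousLinearMap.lsmul ℝ ℝ (W t) (iteratedFDeriv ℝ k ρ (x - t))‖
        ≤ ∫ t, M (‖x‖ - 2) * ‖iteratedFDeriv ℝ k ρ (x - t)‖ := by
      refine integral_mono_of_nonneg (ae_of_all _ fun t => norm_nonneg _)
        ((((hρk_int k).norm.comp_sub_left x).const_mul _)) (ae_of_all _ fun t => ?_)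
      simp only [ContinuousLinearMap.lsmul_apply, norm_smul]
      rcases eq_or_ne (iteratedFDeriv ℝ k ρ (x - t)) 0 with h | h
      · simp [h]
      · have hmem : x - t ∈ Metric.closedBall (0 : Fin n → ℝ) 1 :=
          hρ_tsupp (tsupport_iteratedFDeriv_subset k (subset_closure (mem_support.mpr h)))
        rw [Metric.mem_closedBall, dist_zero_right] at hmem
        have ht : ‖x‖ - 2 ≤ ‖t‖ - 1 := by
          have h5 := norm_add_le (x - t) t
          rw [sub_add_cancel] at h5
          linarith
        have hWt : ‖W t‖ ≤ M (‖x‖ - 2) := by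
          rw [Real.norm_eq_abs, abs_of_nonneg (hW_nonneg t)]
          exact hM_anti ht
        exact mul_le_mul_of_nonneg_right hWt (norm_nonneg _)
    refine step2.trans ?_
    rw [integral_const_mul]
    have : (∫ t, ‖iteratedFDeriv ℝ k ρ (x - t)‖) = ∫ t, ‖iteratedFDeriv ℝ k ρ t‖ :=
      integral_sub_left_eq_self (fun t => ‖iteratedFDeriv ℝ k ρ t‖) volume x
    rw [this]
  -- decay of M
  have hM_decay : ∀ k : ℕ, ∃ D : ℝ, 0 ≤ D ∧ ∀ x : Fin n → ℝ, ‖x‖ ^ k * M (‖x‖ - 2) ≤ D := by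
    intro k
    obtain ⟨D, hDpos, hD⟩ := f.decay k 0
    have hD' : ∀ y : Fin n → ℝ, ‖y‖ ^ k * ‖f y‖ ≤ D := fun y => by
      simpa [norm_iteratedFDeriv_zero] using hD y
    refine ⟨3 ^ k * (D + C₀), by positivity, fun x => ?_⟩
    rcases le_or_gt ‖x‖ 3 with h3 | h3
    · have h1 : ‖x‖ ^ k * M (‖x‖ - 2) ≤ 3 ^ k * C₀ :=
        mul_le_mul (pow_le_pow_left₀ (norm_nonneg _) h3 k) (hM_leC₀ _) (hM_nonneg _) (by positivity)
      have : (3:ℝ) ^ k * C₀ ≤ 3 ^ k * (D + C₀) := by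
        have := hDpos.le
        nlinarith [pow_pos (by norm_num : (0:ℝ) < 3) k]
      linarith
    · have h2 : (0:ℝ) < ‖x‖ - 2 := by linarith
      have hMx : M (‖x‖ - 2) ≤ D / (‖x‖ - 2) ^ k := by
        refine Real.sSup_le ?_ (by positivity)
        rintro - ⟨y, hy, rfl⟩
        rw [le_div_iff₀ (by positivity)]
        calc ‖f y‖ * (‖x‖ - 2) ^ k ≤ ‖f y‖ * ‖y‖ ^ k := by
              refine mul_le_mul_of_nonneg_left (pow_le_pow_left₀ h2.le hy k) (norm_nonneg _)
          _ = ‖y‖ ^ k * ‖f y‖ := mul_comm _ _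
          _ ≤ D := hD' y
      have hx3 : ‖x‖ ≤ 3 * (‖x‖ - 2) := by linarith
      calc ‖x‖ ^ k * M (‖x‖ - 2) ≤ (3 * (‖x‖ - 2)) ^ k * M (‖x‖ - 2) :=
            mul_le_mul_of_nonneg_right (pow_le_pow_left₀ (norm_nonneg _) hx3 k) (hM_nonneg _)
        _ = 3 ^ k * ((‖x‖ - 2) ^ k * M (‖x‖ - 2)) := by rw [mul_pow]; ring
        _ ≤ 3 ^ k * D := by
            refine mul_le_mul_of_nonneg_left ?_ (by positivity)
            rw [le_div_iff₀ (by positivity)] at hMx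
            linarith [hMx]
        _ ≤ 3 ^ k * (D + C₀) := by nlinarith [pow_pos (by norm_num : (0:ℝ) < 3) k, hC₀pos]
  -- the Schwartz map
  set gfun : (Fin n → ℝ) → ℝ := W ⋆[ContinuousLinearMap.lsmul ℝ ℝ, volume] ρ with hgfun
  have hg_smooth : ContDiff ℝ ∞ gfun :=
    hρ_supp.contDiff_convolution_right _ hW_loc hρ_smooth
  have hg_decay : ∀ k m : ℕ, ∃ C : ℝ, ∀ x, ‖x‖ ^ k * ‖iteratedFDeriv ℝ m gfun x‖ ≤ C := by
    intro k m
    obtain ⟨D, hD0, hD⟩ := hM_decay k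
    refine ⟨D * ∫ t, ‖iteratedFDeriv ℝ m ρ t‖, fun x => ?_⟩
    have hIm : 0 ≤ ∫ t, ‖iteratedFDeriv ℝ m ρ t‖ := integral_nonneg fun t => norm_nonneg _
    have h1 : ‖iteratedFDeriv ℝ m gfun x‖ ≤ M (‖x‖ - 2) * ∫ t, ‖iteratedFDeriv ℝ m ρ t‖ := by
      rw [hgfun, conv_iteratedFDeriv hW_loc m ρ hρ_smooth hρ_supp x]
      exact key m x
    calc ‖x‖ ^ k * ‖iteratedFDeriv ℝ m gfun x‖
        ≤ ‖x‖ ^ k * (M (‖x‖ - 2) * ∫ t, ‖iteratedFDeriv ℝ m ρ t‖) :=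
          mul_le_mul_of_nonneg_left h1 (by positivity)
      _ = (‖x‖ ^ k * M (‖x‖ - 2)) * ∫ t, ‖iteratedFDeriv ℝ m ρ t‖ := by ring
      _ ≤ D * ∫ t, ‖iteratedFDeriv ℝ m ρ t‖ := mul_le_mul_of_nonneg_right (hD x) hIm
  set g : SchwartzMap (Fin n → ℝ) ℝ := ⟨gfun, hg_smooth, hg_decay⟩ with hg
  -- lower bound
  have hlow : ∀ x, M ‖x‖ ≤ gfun x := by
    intro x
    have hρint : Integrable ρ := hρ_smooth.continuous.integrable_of_hasCompactSupport hρ_supp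
    have hint2 : Integrable fun t => ρ (x - t) := hρint.comp_sub_left x
    have h1 : (∫ t, ρ (x - t)) = 1 := by
      rw [integral_sub_left_eq_self ρ volume x]
      exact φ.integral_normed
    have hptw : ∀ t, M ‖x‖ * ρ (x - t) ≤ W t • ρ (x - t) := by
      intro t
      rw [smul_eq_mul]
      rcases eq_or_ne (ρ (x - t)) 0 with h | h
      · rw [h]; simp
      · have hmem : x - t ∈ Metric.ball (0 : Fin n → ℝ) 1 := by
          rw [← φ.support_normed_eq (μ := volume)]
          exact mem_support.mpr h
        rw [Metric.mem_ball, dist_zero_right] at hmem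
        have ht : ‖t‖ - 1 ≤ ‖x‖ := by
          have h4 : ‖t‖ ≤ ‖x‖ + ‖x - t‖ := by
            have h5 := norm_sub_le x (x - t)
            rwa [sub_sub_cancel] at h5
          linarith
        exact mul_le_mul_of_nonneg_right (hM_anti ht) (hρ_nonneg _)
    calc M ‖x‖ = M ‖x‖ * ∫ t, ρ (x - t) := by rw [h1, mul_one]
      _ = ∫ t, M ‖x‖ * ρ (x - t) := (integral_const_mul _ _).symm
      _ ≤ ∫ t, W t • ρ (x - t) := by
          have hconv0 : Integrable fun t => W t • ρ (x - t) := by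
            have h6 := (hρ_supp.convolutionExists_right
              (ContinuousLinearMap.lsmul ℝ ℝ) hW_loc hρ_smooth.continuous) x
            simpa [ConvolutionExistsAt, ContinuousLinearMap.lsmul_apply] using h6
          exact integral_mono (hint2.const_mul _) hconv0 hptw
      _ = gfun x := by rw [hgfun, convolution_def]; simp [ContinuousLinearMap.lsmul_apply]
  refine ⟨g, fun x => ?_, fun x => ?_⟩
  · exact le_trans (hM_nonneg ‖x‖) (hlow x)
  · exact le_trans (hM_le le_rfl) (hlow x)
end

section
/- Let Φ be a complex-valued Schwartz function on ℝⁿ and let c₁, …, cₙ be positive real numbers. Then the function x ↦ Φ(x) · ∏_{i=1}^n |x_i|^{c_i − 1} is absolutely integrable on ℝⁿ with respect to Lebesgue measure. Consequently, for complex numbers s₁, …, sₙ with Re s_i > 0, the multivariable zeta integral Z(Φ; s₁, …, sₙ) = ∫_{ℝⁿ} Φ(x) ∏_{i=1}^n |x_i|^{s_i − 1} dx converges absolutely. -/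
open MeasureTheory Set

/-- helper: integrability of `g ∘ abs` from integrability on `Ioi 0`. -/
lemma aux_integrable_comp_abs {g : ℝ → ℝ}
    (hg : IntegrableOn (fun x => g |x|) (Ioi 0)) : Integrable (fun x => g |x|) := by
  have int_Iic : IntegrableOn (fun x ↦ g |x|) (Iic 0) := by
    rw [← Measure.map_neg_eq_self (volume : Measure ℝ)]
    have m : MeasurableEmbedding fun x : ℝ => -x := (Homeomorph.neg ℝ).measurableEmbedding
    rw [m.integrableOn_map_iff]
    simp_rw [Function.comp_def, abs_neg, neg_preimage, neg_Iic, neg_zero]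
    exact Iff.mpr integrableOn_Ici_iff_integrableOn_Ioi hg
  rw [← integrableOn_univ, ← Iic_union_Ioi (a := (0:ℝ))]
  exact int_Iic.union hg

/-- key one-dimensional integrability lemma -/
lemma aux_onedim {a : ℝ} (ha : 0 < a) {N : ℕ} (hN : a < N) :
    Integrable (fun t : ℝ => |t| ^ (a - 1) * (1 + |t|) ^ (-(N:ℝ))) := by
  apply aux_integrable_comp_abs (g := fun u => u ^ (a - 1) * (1 + u) ^ (-(N:ℝ)))
  have meas : AEStronglyMeasurable
      (fun x : ℝ => |x| ^ (a - 1) * (1 + |x|) ^ (-(N:ℝ))) := by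
    apply Measurable.aestronglyMeasurable
    apply Measurable.mul
    · fun_prop
    · fun_prop
  rw [show Ioi (0:ℝ) = Ioc 0 1 ∪ Ioi 1 by rw [Ioc_union_Ioi_eq_Ioi]; norm_num]
  refine IntegrableOn.union ?_ ?_
  · -- on (0,1]: dominated by t ^ (a-1)
    have h1 : IntegrableOn (fun t : ℝ => t ^ (a - 1)) (Ioc 0 1) := by
      rw [← intervalIntegrable_iff_integrableOn_Ioc_of_le (by norm_num)]
      exact intervalIntegral.intervalIntegrable_rpow' (by linarith)
    refine Integrable.mono h1 meas.restrict ?_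
    filter_upwards [ae_restrict_mem measurableSet_Ioc] with t ht
    have ht0 : (0:ℝ) < t := ht.1
    have hfn : (0:ℝ) ≤ |t| ^ (a-1) * (1+|t|) ^ (-(N:ℝ)) := by positivity
    have hgn : (0:ℝ) ≤ t ^ (a-1) := Real.rpow_nonneg ht0.le _
    rw [Real.norm_of_nonneg hfn, Real.norm_of_nonneg hgn, abs_of_pos ht0]
    have hle : (1 + t) ^ (-(N:ℝ)) ≤ 1 :=
      Real.rpow_le_one_of_one_le_of_nonpos (by linarith) (neg_nonpos.mpr (Nat.cast_nonneg N))
    calc t ^ (a-1) * (1+t) ^ (-(N:ℝ)) ≤ t ^ (a-1) * 1 :=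
          mul_le_mul_of_nonneg_left hle hgn
      _ = t ^ (a-1) := mul_one _
  · -- on (1,oo): dominated by t ^ (a-1-N)
    have h1 : IntegrableOn (fun t : ℝ => t ^ (a - 1 - N)) (Ioi 1) :=
      integrableOn_Ioi_rpow_of_lt (by linarith) one_pos
    refine Integrable.mono h1 meas.restrict ?_
    filter_upwards [ae_restrict_mem measurableSet_Ioi] with t ht
    have ht0 : (0:ℝ) < t := lt_trans one_pos ht
    have hfn : (0:ℝ) ≤ |t| ^ (a-1) * (1+|t|) ^ (-(N:ℝ)) := by positivity
    have hgn : (0:ℝ) ≤ t ^ (a-1-N) := Real.rpow_nonneg ht0.le _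
    rw [Real.norm_of_nonneg hfn, Real.norm_of_nonneg hgn, abs_of_pos ht0]
    have hle : (1 + t) ^ (-(N:ℝ)) ≤ t ^ (-(N:ℝ)) :=
      Real.rpow_le_rpow_of_nonpos ht0 (by linarith) (neg_nonpos.mpr (Nat.cast_nonneg N))
    calc t ^ (a-1) * (1+t) ^ (-(N:ℝ)) ≤ t ^ (a-1) * t ^ (-(N:ℝ)) :=
          mul_le_mul_of_nonneg_left hle (Real.rpow_nonneg ht0.le _)
      _ = t ^ (a-1-N) := by rw [← Real.rpow_add ht0]; ring_nf

lemma aux_abs_cpow_le {r : ℝ} (hr : 0 ≤ r) (w : ℂ) :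
    ‖(r : ℂ) ^ w‖ ≤ r ^ w.re := by
  rcases hr.lt_or_eq with h | h
  · rw [Complex.norm_cpow_eq_rpow_re_of_pos h]
  · rcases eq_or_ne w 0 with hw | hw
    · simp [← h, hw]
    · rw [← h, Complex.ofReal_zero, Complex.zero_cpow hw]
      simpa using Real.rpow_nonneg le_rfl w.re

lemma aux_main (n : ℕ) (Φ : SchwartzMap (Fin n → ℝ) ℂ) (c : Fin n → ℝ)
    (hc : ∀ i, 0 < c i) :
    Integrable (fun x : Fin n → ℝ => Φ x * ((∏ i, |x i| ^ (c i - 1) : ℝ) : ℂ)) volume := by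
  set N : ℕ := 1 + ∑ i, ⌈c i⌉₊ with hNdef
  have hcN : ∀ i, c i < N := by
    intro i
    have h1 : c i ≤ (⌈c i⌉₊ : ℝ) := Nat.le_ceil _
    have h2 : (⌈c i⌉₊ : ℕ) ≤ ∑ j, ⌈c j⌉₊ :=
      Finset.single_le_sum (f := fun j => ⌈c j⌉₊) (fun j _ => Nat.zero_le _) (Finset.mem_univ i)
    have h3 : ((⌈c i⌉₊ : ℕ) : ℝ) ≤ ((∑ j, ⌈c j⌉₊ : ℕ) : ℝ) := by exact_mod_cast h2
    have h4 : (N : ℝ) = 1 + ((∑ j, ⌈c j⌉₊ : ℕ) : ℝ) := by rw [hNdef]; push_cast; ring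
    linarith
  set k := n * N with hk
  set C : ℝ := 2 ^ k *
    (Finset.Iic (k, 0)).sup (fun m => SchwartzMap.seminorm ℝ m.1 m.2) Φ with hCdef
  have hΦ : ∀ x, (1 + ‖x‖) ^ k * ‖Φ x‖ ≤ C := by
    intro x
    have := SchwartzMap.one_add_le_sup_seminorm_apply (𝕜 := ℝ) (m := (k, 0))
      le_rfl le_rfl Φ x
    simpa [norm_iteratedFDeriv_zero] using this
  have hint : Integrable (fun x : Fin n → ℝ =>
      C * ∏ i, (|x i| ^ (c i - 1) * (1 + |x i|) ^ (-(N:ℝ)))) volume :=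
    (Integrable.fintype_prod
      (f := fun i (t : ℝ) => |t| ^ (c i - 1) * (1 + |t|) ^ (-(N:ℝ)))
      (fun i => aux_onedim (hc i) (hcN i))).const_mul C
  refine hint.mono' ?_ ?_
  · refine (Φ.continuous.measurable.mul
      (Complex.measurable_ofReal.comp ?_)).aestronglyMeasurable
    exact Finset.measurable_prod _ (fun i _ => by fun_prop)
  · refine Filter.Eventually.of_forall (fun x => ?_)
    have hprodnn : (0:ℝ) ≤ ∏ i, |x i| ^ (c i - 1) :=
      Finset.prod_nonneg fun i _ => Real.rpow_nonneg (abs_nonneg _) _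
    rw [norm_mul, Complex.norm_real, Real.norm_of_nonneg hprodnn]
    have hbpos : (0:ℝ) < ∏ i, ((1:ℝ) + |x i|) ^ N :=
      Finset.prod_pos fun i _ => pow_pos (by positivity) N
    have h2 : ∏ i, ((1:ℝ) + |x i|) ^ N ≤ (1 + ‖x‖) ^ k := by
      calc ∏ i, ((1:ℝ) + |x i|) ^ N ≤ ∏ _i : Fin n, ((1:ℝ) + ‖x‖) ^ N := by
            refine Finset.prod_le_prod (fun i _ => by positivity) (fun i _ => ?_)
            have h1 : |x i| ≤ ‖x‖ := by
              simpa [Real.norm_eq_abs] using norm_le_pi_norm x i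
            exact pow_le_pow_left₀ (by positivity) (by linarith) N
        _ = (1 + ‖x‖) ^ k := by
            rw [Finset.prod_const, Finset.card_univ, Fintype.card_fin, ← pow_mul, hk, Nat.mul_comm]
    have key : ‖Φ x‖ * ∏ i, ((1:ℝ) + |x i|) ^ N ≤ C :=
      calc ‖Φ x‖ * ∏ i, ((1:ℝ) + |x i|) ^ N ≤ ‖Φ x‖ * (1 + ‖x‖) ^ k :=
            mul_le_mul_of_nonneg_left h2 (norm_nonneg _)
        _ = (1 + ‖x‖) ^ k * ‖Φ x‖ := mul_comm _ _
        _ ≤ C := hΦ x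
    have hrw : ∏ i, (|x i| ^ (c i - 1) * (1 + |x i|) ^ (-(N:ℝ)))
        = (∏ i, |x i| ^ (c i - 1)) * (∏ i, ((1:ℝ) + |x i|) ^ N)⁻¹ := by
      rw [← Finset.prod_inv_distrib, ← Finset.prod_mul_distrib]
      refine Finset.prod_congr rfl (fun i _ => ?_)
      rw [← Real.rpow_natCast ((1:ℝ) + |x i|) N, ← Real.rpow_neg (by positivity)]
    have expand : ‖Φ x‖ * ∏ i, |x i| ^ (c i - 1)
        = (‖Φ x‖ * ∏ i, ((1:ℝ) + |x i|) ^ N) *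
          ((∏ i, |x i| ^ (c i - 1)) * (∏ i, ((1:ℝ) + |x i|) ^ N)⁻¹) := by
      have hb1 : (∏ i, ((1:ℝ) + |x i|) ^ N) * (∏ i, ((1:ℝ) + |x i|) ^ N)⁻¹ = 1 :=
        mul_inv_cancel₀ hbpos.ne'
      calc ‖Φ x‖ * ∏ i, |x i| ^ (c i - 1)
          = ‖Φ x‖ * (∏ i, |x i| ^ (c i - 1)) *
            ((∏ i, ((1:ℝ) + |x i|) ^ N) * (∏ i, ((1:ℝ) + |x i|) ^ N)⁻¹) := by
              rw [hb1, mul_one]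
        _ = (‖Φ x‖ * ∏ i, ((1:ℝ) + |x i|) ^ N) *
            ((∏ i, |x i| ^ (c i - 1)) * (∏ i, ((1:ℝ) + |x i|) ^ N)⁻¹) := by ring
    rw [hrw, expand]
    exact mul_le_mul_of_nonneg_right key
      (mul_nonneg hprodnn (inv_nonneg.mpr hbpos.le))

theorem stmt_12 (n : ℕ) (Φ : SchwartzMap (Fin n → ℝ) ℂ) (c : Fin n → ℝ)
    (hc : ∀ i, 0 < c i) :
    Integrable (fun x : Fin n → ℝ => Φ x * ((∏ i, |x i| ^ (c i - 1) : ℝ) : ℂ)) volume ∧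
    ∀ s : Fin n → ℂ, (∀ i, 0 < (s i).re) →
      Integrable (fun x : Fin n → ℝ =>
        Φ x * ∏ i, (Complex.ofReal |x i|) ^ (s i - 1)) volume := by
  refine ⟨aux_main n Φ c hc, fun s hs => ?_⟩
  have base := aux_main n Φ (fun i => (s i).re) hs
  refine base.mono ?_ ?_
  · refine (Φ.continuous.measurable.mul ?_).aestronglyMeasurable
    refine Finset.measurable_prod _ (fun i _ => ?_)
    exact (Complex.measurable_ofReal.comp (measurable_pi_apply i).abs).pow measurable_const
  · refine Filter.Eventually.of_forall (fun x => ?_)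
    have hprodnn : (0:ℝ) ≤ ∏ i, |x i| ^ ((s i).re - 1) :=
      Finset.prod_nonneg fun i _ => Real.rpow_nonneg (abs_nonneg _) _
    rw [norm_mul, norm_mul, Complex.norm_real, Real.norm_of_nonneg hprodnn]
    refine mul_le_mul_of_nonneg_left ?_ (norm_nonneg _)
    rw [norm_prod]
    refine Finset.prod_le_prod (fun i _ => norm_nonneg _) (fun i _ => ?_)
    have := aux_abs_cpow_le (abs_nonneg (x i)) (s i - 1)
    simpa [Complex.sub_re] using this
end

section
/- Let p be a prime. For every pair (h₁, h₂) of invertible 2×2 matrices over ℚ_p with det h₁ = det h₂, there exist an invertible diagonal matrix t over ℚ_p, elements u, v ∈ ℚ_p, ε ∈ ℚ_p^×, and matrices k₁, k₂ ∈ GL₂(ℚ_p) all of whose entries lie in ℤ_p and whose determinants are units of ℤ_p, such that h₁ = t · [[1, u],[0, 1]] · k₁ and h₂ = t · [[ε, 0],[0, ε⁻¹]] · [[1, v],[0, 1]] · k₂. (This exhibits the pairs ([[1,u],[0,1]], [[ε,0],[0,ε⁻¹]]·[[1,v],[0,1]]) as representatives of the double cosets D(ℚ_p)\H₁(ℚ_p)/(GL₂(ℤ_p)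 × GL₂(ℤ_p)).) -/
/-!
Every `g ∈ GL₂(K)` over a normed field factors as `g = diag(a, d) · [[1, u], [0, 1]] · k` with
`k` integral of unit determinant: reduce the bottom row of `g` to `(0, *)` by a column operation
pivoting on its entry of larger norm. Decomposing `h₁` and `h₂` this way with diagonal parts `diag(a, d)` and
`diag(a', d')`, the equality of determinants forces `w = a'd' / (ad)` to be a unit, so
`diag(1, w)` can be moved into the integral factor of `h₂`, using
`diag(a', d') = diag(a, d) · diag(ε, ε⁻¹) · diag(1, w)` with `ε = a' / a` (the unipotent
parameter `v` of `h₂` becomes `v / w`).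
-/

open Matrix

variable {K : Type*}

section NormedField

variable [NormedField K]

/-- For `K = ℚ_[p]` this is membership in `GL₂(ℤ_p)`. -/
def IsIntegralGL (k : Matrix (Fin 2) (Fin 2) K) : Prop :=
  (∀ i j, ‖k i j‖ ≤ 1) ∧ ‖k.det‖ = 1

lemma isIntegralGL_lowerUnitriangular {x : K} (hx : ‖x‖ ≤ 1) :
    IsIntegralGL !![1, 0; x, 1] := by
  refine ⟨fun i j => ?_, by simp [det_fin_two_of]⟩
  fin_cases i <;> fin_cases j <;> simp [hx]

lemma isIntegralGL_antidiagonal {x : K} (hx : ‖x‖ ≤ 1) :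
    IsIntegralGL !![0, 1; 1, x] := by
  refine ⟨fun i j => ?_, by simp [det_fin_two_of]⟩
  fin_cases i <;> fin_cases j <;> simp [hx]

lemma IsIntegralGL.diagonal_one_mul {k : Matrix (Fin 2) (Fin 2) K} (hk : IsIntegralGL k)
    {w : K} (hw : ‖w‖ = 1) : IsIntegralGL (!![1, 0; 0, w] * k) := by
  refine ⟨fun i j => ?_, by rw [det_mul, norm_mul, hk.2, det_fin_two_of]; simp [hw]⟩
  fin_cases i <;> simpa [mul_apply, Fin.sum_univ_two, hw] using hk.1 _ j

lemma exists_iwasawa_of_norm_le {α β γ δ : K} (hg : α * δ - β * γ ≠ 0) (hδ : δ ≠ 0)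
    (hγδ : ‖γ‖ ≤ ‖δ‖) :
    ∃ (a d u : K) (k : Matrix (Fin 2) (Fin 2) K), a ≠ 0 ∧ d ≠ 0 ∧ IsIntegralGL k ∧
      !![α, β; γ, δ] = !![a, 0; 0, d] * !![1, u; 0, 1] * k := by
  refine ⟨(α * δ - β * γ) / δ, δ, β * δ / (α * δ - β * γ), !![1, 0; γ / δ, 1],
    div_ne_zero hg hδ, hδ, isIntegralGL_lowerUnitriangular ?_, ?_⟩
  · rw [norm_div]
    exact div_le_one_of_le₀ hγδ (norm_nonneg _)
  · ext i j
    fin_cases i <;> fin_cases j <;> simp [mul_apply, Fin.sum_univ_two] <;> field_simp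
    ring

lemma exists_iwasawa_of_norm_lt {α β γ δ : K} (hg : α * δ - β * γ ≠ 0) (hδγ : ‖δ‖ < ‖γ‖) :
    ∃ (a d u : K) (k : Matrix (Fin 2) (Fin 2) K), a ≠ 0 ∧ d ≠ 0 ∧ IsIntegralGL k ∧
      !![α, β; γ, δ] = !![a, 0; 0, d] * !![1, u; 0, 1] * k := by
  have hγ : γ ≠ 0 := norm_pos_iff.mp ((norm_nonneg δ).trans_lt hδγ)
  have hg' : β * γ - α * δ ≠ 0 := fun h => hg (by linear_combination -h)
  refine ⟨(β * γ - α * δ) / γ, γ, α * γ / (β * γ - α * δ), !![0, 1; 1, δ / γ],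
    div_ne_zero hg' hγ, hγ, isIntegralGL_antidiagonal ?_, ?_⟩
  · rw [norm_div]
    exact div_le_one_of_le₀ hδγ.le (norm_nonneg _)
  · ext i j
    fin_cases i <;> fin_cases j <;> simp [mul_apply, Fin.sum_univ_two] <;> field_simp
    ring

lemma exists_iwasawa {g : Matrix (Fin 2) (Fin 2) K} (hg : g.det ≠ 0) :
    ∃ (a d u : K) (k : Matrix (Fin 2) (Fin 2) K), a ≠ 0 ∧ d ≠ 0 ∧ IsIntegralGL k ∧
      g = !![a, 0; 0, d] * !![1, u; 0, 1] * k := by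
  rw [det_fin_two] at hg
  rw [eta_fin_two g]
  rcases le_or_gt ‖g 1 0‖ ‖g 1 1‖ with h | h
  · have hδ : g 1 1 ≠ 0 := by
      rintro hδ
      have hγ : g 1 0 = 0 := norm_le_zero_iff.mp (by simpa [hδ] using h)
      simp [hγ, hδ] at hg
    exact exists_iwasawa_of_norm_le hg hδ h
  · exact exists_iwasawa_of_norm_lt hg h

end NormedField

lemma det_iwasawa [CommRing K] (a d u : K) (k : Matrix (Fin 2) (Fin 2) K) :
    (!![a, 0; 0, d] * !![1, u; 0, 1] * k).det = a * d * k.det := by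
  rw [det_mul, det_mul, det_fin_two_of, det_fin_two_of]
  ring

lemma diagonal_mul_unipotent_eq [Field K] {a d a' d' : K} (ha : a ≠ 0) (hd : d ≠ 0)
    (ha' : a' ≠ 0) (hd' : d' ≠ 0) (v : K) :
    !![a', 0; 0, d'] * !![1, v; 0, 1] =
      !![a, 0; 0, d] * (!![a' / a, 0; 0, (a' / a)⁻¹] * !![1, v / (a' * d' / (a * d)); 0, 1]) *
        !![1, 0; 0, a' * d' / (a * d)] := by
  ext i j
  fin_cases i <;> fin_cases j <;> simp [mul_apply, Fin.sum_univ_two] <;> field_simp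

theorem stmt_14_general (p : ℕ) [Fact p.Prime] (h₁ h₂ : Matrix (Fin 2) (Fin 2) ℚ_[p])
    (hu₁ : IsUnit h₁.det) (hdet : h₁.det = h₂.det) :
    ∃ (a d : ℚ_[p]) (u v : ℚ_[p]) (ε : ℚ_[p]) (k₁ k₂ : Matrix (Fin 2) (Fin 2) ℚ_[p]),
      a ≠ 0 ∧ d ≠ 0 ∧ ε ≠ 0 ∧
      (∀ i j, ‖k₁ i j‖ ≤ 1) ∧ ‖k₁.det‖ = 1 ∧
      (∀ i j, ‖k₂ i j‖ ≤ 1) ∧ ‖k₂.det‖ = 1 ∧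
      h₁ = !![a,0;0,d] * !![1,u;0,1] * k₁ ∧
      h₂ = !![a,0;0,d] * (!![ε,0;0,ε⁻¹] * !![1,v;0,1]) * k₂ := by
  obtain ⟨a, d, u, k₁, ha, hd, hk₁, rfl⟩ := exists_iwasawa hu₁.ne_zero
  obtain ⟨a', d', v, k₂, ha', hd', hk₂, rfl⟩ := exists_iwasawa (hdet ▸ hu₁.ne_zero)
  have hw : ‖a' * d' / (a * d)‖ = 1 := by
    have := congrArg norm hdet
    rw [det_iwasawa, det_iwasawa, norm_mul, norm_mul (a' * d'), hk₁.2, hk₂.2, mul_one,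
      mul_one] at this
    rw [norm_div, ← this, div_self (by simp [ha, hd])]
  have hk₂' := hk₂.diagonal_one_mul hw
  refine ⟨a, d, u, v / (a' * d' / (a * d)), a' / a, k₁, _, ha, hd, div_ne_zero ha' ha, hk₁.1, hk₁.2, hk₂'.1, hk₂'.2, rfl, ?_⟩
  rw [diagonal_mul_unipotent_eq ha hd ha' hd', mul_assoc _ !![1, 0; 0, _], mul_assoc]

theorem stmt_14 (p : ℕ) [Fact p.Prime] (h₁ h₂ : Matrix (Fin 2) (Fin 2) ℚ_[p])
    (hu₁ : IsUnit h₁.det) (hu₂ : IsUnit h₂.det) (hdet : h₁.det = h₂.det) :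
    ∃ (a d : ℚ_[p]) (u v : ℚ_[p]) (ε : ℚ_[p]) (k₁ k₂ : Matrix (Fin 2) (Fin 2) ℚ_[p]),
      a ≠ 0 ∧ d ≠ 0 ∧ ε ≠ 0 ∧
      (∀ i j, ‖k₁ i j‖ ≤ 1) ∧ ‖k₁.det‖ = 1 ∧
      (∀ i j, ‖k₂ i j‖ ≤ 1) ∧ ‖k₂.det‖ = 1 ∧
      h₁ = !![a,0;0,d] * !![1,u;0,1] * k₁ ∧
      h₂ = !![a,0;0,d] * (!![ε,0;0,ε⁻¹] * !![1,v;0,1]) * k₂ :=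
  stmt_14_general p h₁ h₂ hu₁ hdet
end
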